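/- arXiv:2311.01579 — 4 statements merged into one kernel-verified Lean document; each statement's English description precedes it below -/
import Mathlib

section
/- Let k ≥ 4 be fixed. There exists n_0 such that for all n ≥ n_0 with (k-1) | n, rex(n, K_3, P_k) = (n/(k-1))·C(k-1,3), where C(k-1,3) is the binomial coefficient; moreover, the unique (up to isomorphism) n-vertex regular P_k-free graph attaining this maximum is the disjoint union of n/(k-1) copies of the complete graph K_{k-1}. -/
open SimpleGraph

/-- The number of subgraphs of `G` isomorphic to `H` (the number of copies of `H` in `G`). -/
noncomputable def copyCount {W V : Type*} (H : SimpleGraph W) (G : SimpleGraph V) : ℕ :=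
  Nat.card {G' : G.Subgraph // Nonempty (G'.coe ≃g H)}

/-- `G` is `F`-free: it has no subgraph isomorphic to `F`. -/
def FreeOf {U V : Type*} (F : SimpleGraph U) (G : SimpleGraph V) : Prop :=
  ∀ G' : G.Subgraph, ¬ Nonempty (G'.coe ≃g F)

/-- `G` is regular: every vertex has the same degree. -/
def IsRegularGraph {V : Type*} (G : SimpleGraph V) : Prop :=
  ∃ d : ℕ, ∀ v : V, Nat.card (G.neighborSet v) = d

/-- `rex n H F`: the maximum number of copies of `H` in an `F`-free regular graph
on `n` vertices. -/
noncomputable def rex {W U : Type*} (n : ℕ) (H : SimpleGraph W) (F : SimpleGraph U) : ℕ :=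
  sSup {m : ℕ | ∃ G : SimpleGraph (Fin n), FreeOf F G ∧ IsRegularGraph G ∧ copyCount H G = m}

/-- The disjoint union of the family of graphs `f i`, on vertex set `ι × V`. -/
def disjUnion {ι V : Type*} (f : ι → SimpleGraph V) : SimpleGraph (ι × V) where
  Adj x y := x.1 = y.1 ∧ (f x.1).Adj x.2 y.2
  symm := ⟨fun _ _ h => ⟨h.1.symm, h.1 ▸ h.2.symm⟩⟩
  loopless := ⟨fun x h => (f x.1).loopless.irrefl x.2 h.2⟩

/-! A graph of minimum degree `d` contains a path on `d + 1` vertices (every neighbour of the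
first vertex of a longest path lies on the path), so a `P_k`-free `d`-regular graph has
`d ≤ k - 2`. A vertex of degree `d` lies in at most `C(d, 2)` triangles, with equality iff its
neighbourhood is a clique; hence such a graph on `n` vertices has at most
`n C(k - 2, 2) / 3 = (n / (k - 1)) C(k - 1, 3)` triangles, and equality forces `d = k - 2` and
all neighbourhoods to be cliques. A regular graph whose neighbourhoods are cliques is a disjoint
union of complete graphs, and the disjoint union of copies of `K_(k-1)` attains the bound. -/

open Finset

lemma Nat.choose_two_lt_choose_two {a b : ℕ} (hab : a < b) (hb : 2 ≤ b) :
    a.choose 2 < b.choose 2 := by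
  obtain ⟨c, rfl⟩ : ∃ c, b = c + 1 := ⟨b - 1, by omega⟩
  have h : (c + 1).choose 2 = c + c.choose 2 := by rw [Nat.choose_succ_succ', Nat.choose_one_right]
  have := Nat.choose_le_choose 2 (Nat.le_of_lt_succ hab)
  omega

lemma Nat.mul_sub_one_choose_two (K : ℕ) : K * (K - 1).choose 2 = 3 * K.choose 3 := by
  cases K with
  | zero => rfl
  | succ K => rw [Nat.add_sub_cancel, Nat.add_one_mul_choose_eq, mul_comm]

lemma Fintype.exists_equiv_fin_prod_fin_of_card_fiber {β γ : Type*} [Fintype β]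
    [Fintype γ] [DecidableEq γ] {N K : ℕ} (π : β → γ) (hK : 0 < K)
    (hfiber : ∀ c, Fintype.card {x // π x = c} = K) (hcard : Fintype.card β = N * K) :
    ∃ e : β ≃ Fin N × Fin K, ∀ x y, (e x).1 = (e y).1 ↔ π x = π y := by
  have hγ : Fintype.card γ = N := by
    have := Fintype.card_congr (Equiv.sigmaFiberEquiv π)
    simp only [Fintype.card_sigma, hfiber, sum_const, card_univ, smul_eq_mul, hcard] at this
    exact Nat.eq_of_mul_eq_mul_right hK this
  let g := Fintype.equivFinOfCardEq hγ
  refine ⟨(Equiv.sigmaFiberEquiv π).symm.trans <|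
    (Equiv.sigmaCongrRight fun c => Fintype.equivFinOfCardEq (hfiber c)).trans <|
    (Equiv.sigmaEquivProd γ (Fin K)).trans (g.prodCongr (Equiv.refl _)), fun x y => ?_⟩
  exact g.injective.eq_iff

namespace SimpleGraph

section Copies

variable {α V W : Type*}

lemma freeOf_iff_free (F : SimpleGraph α) (G : SimpleGraph V) : FreeOf F G ↔ F.Free G := by
  simp only [FreeOf, Free, isContained_iff_exists_iso_subgraph, not_exists]
  exact forall_congr' fun G' => ⟨fun h ⟨e⟩ => h ⟨e.symm⟩, fun h ⟨e⟩ => h ⟨e.symm⟩⟩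

lemma isRegularGraph_iff (G : SimpleGraph V) [Fintype V] [DecidableRel G.Adj] :
    IsRegularGraph G ↔ ∃ d, G.IsRegularOfDegree d := by
  simp only [IsRegularGraph, IsRegularOfDegree, Nat.card_eq_fintype_card,
    card_neighborSet_eq_degree]

lemma Subgraph.adj_iff_of_iso_top {G : SimpleGraph V} {G' : G.Subgraph}
    (e : G'.coe ≃g (⊤ : SimpleGraph W)) {x y : V} :
    G'.Adj x y ↔ x ∈ G'.verts ∧ y ∈ G'.verts ∧ x ≠ y := by
  refine ⟨fun h => ⟨G'.edge_vert h, G'.edge_vert h.symm, h.ne⟩, fun ⟨hx, hy, hxy⟩ => ?_⟩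
  change G'.coe.Adj ⟨x, hx⟩ ⟨y, hy⟩
  rw [← e.map_adj_iff]
  exact e.injective.ne fun h => hxy (congrArg Subtype.val h)

lemma copyCount_top_eq_card_cliqueFinset [Fintype V] [DecidableEq V] (G : SimpleGraph V)
    [DecidableRel G.Adj] (m : ℕ) :
    _root_.copyCount (⊤ : SimpleGraph (Fin m)) G = #(G.cliqueFinset m) := by
  classical
  let Φ : {G' : G.Subgraph // Nonempty (G'.coe ≃g (⊤ : SimpleGraph (Fin m)))} →
      G.cliqueFinset m := fun G' => ⟨G'.1.verts.toFinset, by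
    obtain ⟨G', ⟨e⟩⟩ := G'
    refine G.mem_cliqueFinset_iff.2 ⟨fun x hx y hy hxy => G'.adj_sub ?_, ?_⟩
    · simp only [Set.coe_toFinset] at hx hy
      exact (Subgraph.adj_iff_of_iso_top e).2 ⟨hx, hy, hxy⟩
    · simpa [Set.toFinset_card] using Fintype.card_congr e.toEquiv⟩
  have hΦ : Function.Bijective Φ := by
    refine ⟨fun ⟨G₁, ⟨e₁⟩⟩ ⟨G₂, ⟨e₂⟩⟩ h => ?_, fun ⟨s, hs⟩ => ?_⟩
    · have hv : G₁.verts = G₂.verts := by simpa [Φ] using congrArg Subtype.val h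
      refine Subtype.ext (Subgraph.ext hv ?_)
      ext x y
      rw [Subgraph.adj_iff_of_iso_top e₁, Subgraph.adj_iff_of_iso_top e₂, hv]
    · obtain ⟨hclique, hcard⟩ := G.mem_cliqueFinset_iff.1 hs
      let T : G.Subgraph := (⊤ : G.Subgraph).induce s
      have hT : T.coe = ⊤ := by
        ext ⟨x, hx⟩ ⟨y, hy⟩
        exact ⟨fun h => h.ne, fun h => ⟨hx, hy, hclique hx hy fun hxy => h (Subtype.ext hxy)⟩⟩
      refine ⟨⟨T, ⟨hT ▸ Iso.completeGraph (s.equivFinOfCardEq hcard)⟩⟩, ?_⟩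
      ext x
      simp [Φ, T]
  rw [_root_.copyCount, Nat.card_eq_of_bijective Φ hΦ, Nat.card_eq_fintype_card,
    Fintype.card_coe]

end Copies

section Triangles

variable {V : Type*} [Fintype V] [DecidableEq V] (G : SimpleGraph V) [DecidableRel G.Adj]

lemma card_filter_mem_cliqueFinset_three (v : V) :
    #{s ∈ G.cliqueFinset 3 | v ∈ s} =
      #{t ∈ (G.neighborFinset v).powersetCard 2 | G.IsClique (SetLike.coe t)} := by
  have hv : ∀ t ∈ (G.neighborFinset v).powersetCard 2, v ∉ t := fun t ht h =>
    G.loopless.irrefl v ((mem_neighborFinset _ _ _).1 ((mem_powersetCard.1 ht).1 h))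
  refine card_nbij' (·.erase v) (insert v) (fun s hs => ?_) (fun t ht => ?_)
    (fun s hs => insert_erase (mem_filter.1 hs).2)
    (fun t ht => erase_insert (hv t (mem_filter.1 ht).1))
  · rw [mem_coe, mem_filter, mem_cliqueFinset_iff, isNClique_iff] at hs
    obtain ⟨⟨hs, hcard⟩, hvs⟩ := hs
    rw [mem_coe, mem_filter, mem_powersetCard, card_erase_of_mem hvs, hcard]
    refine ⟨⟨fun x hx => ?_, rfl⟩, hs.subset (coe_subset.2 (erase_subset _ _))⟩
    obtain ⟨hxv, hx⟩ := mem_erase.1 hx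
    exact (mem_neighborFinset _ _ _).2 (hs hvs hx hxv.symm)
  · rw [mem_coe, mem_filter] at ht
    obtain ⟨hmem, ht⟩ := ht
    obtain ⟨hsub, hcard⟩ := mem_powersetCard.1 hmem
    rw [mem_coe, mem_filter, mem_cliqueFinset_iff, isNClique_iff,
      card_insert_of_notMem (hv t hmem), hcard, coe_insert, isClique_insert]
    exact ⟨⟨⟨ht, fun b hb _ => (mem_neighborFinset _ _ _).1 (hsub hb)⟩, rfl⟩, mem_insert_self _ _⟩

lemma card_filter_mem_cliqueFinset_three_le (v : V) :
    #{s ∈ G.cliqueFinset 3 | v ∈ s} ≤ (G.degree v).choose 2 := by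
  rw [card_filter_mem_cliqueFinset_three, ← card_neighborFinset_eq_degree, ← card_powersetCard]
  exact card_filter_le _ _

lemma card_filter_mem_cliqueFinset_three_eq_iff (v : V) :
    #{s ∈ G.cliqueFinset 3 | v ∈ s} = (G.degree v).choose 2 ↔ G.IsClique (G.neighborSet v) := by
  rw [card_filter_mem_cliqueFinset_three, ← card_neighborFinset_eq_degree, ← card_powersetCard,
    card_filter_eq_iff]
  refine ⟨fun h x hx y hy hxy => ?_, fun h t ht => h.subset ?_⟩
  · have := h {x, y} (mem_powersetCard.2 ⟨?_, card_pair hxy⟩)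
    · exact isClique_pair.1 (by simpa using this) hxy
    · simpa [insert_subset_iff] using ⟨hx, hy⟩
  · exact fun x hx => (mem_neighborFinset _ _ _).1 ((mem_powersetCard.1 ht).1 hx)

lemma three_mul_card_cliqueFinset_three :
    3 * #(G.cliqueFinset 3) = ∑ v, #{s ∈ G.cliqueFinset 3 | v ∈ s} := by
  have := sum_card_bipartiteAbove_eq_sum_card_bipartiteBelow (s := univ)
    (t := G.cliqueFinset 3) (r := fun v s => v ∈ s)
  simp only [bipartiteAbove, bipartiteBelow, filter_mem_eq_inter, univ_inter] at this
  rw [this, sum_congr rfl fun s hs => (G.mem_cliqueFinset_iff.1 hs).2, sum_const, smul_eq_mul,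
    mul_comm]

variable {G} {d : ℕ}

lemma IsRegularOfDegree.three_mul_card_cliqueFinset_three_le (hd : G.IsRegularOfDegree d) :
    3 * #(G.cliqueFinset 3) ≤ Fintype.card V * d.choose 2 := by
  rw [three_mul_card_cliqueFinset_three, ← smul_eq_mul, ← card_univ, ← sum_const]
  exact sum_le_sum fun v _ => hd.degree_eq v ▸ G.card_filter_mem_cliqueFinset_three_le v

lemma IsRegularOfDegree.three_mul_card_cliqueFinset_three_eq_iff (hd : G.IsRegularOfDegree d) :
    3 * #(G.cliqueFinset 3) = Fintype.card V * d.choose 2 ↔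
      ∀ v, G.IsClique (G.neighborSet v) := by
  rw [three_mul_card_cliqueFinset_three, ← smul_eq_mul, ← card_univ, ← sum_const,
    sum_eq_sum_iff_of_le fun v _ => hd.degree_eq v ▸ G.card_filter_mem_cliqueFinset_three_le v]
  exact forall_congr' fun v => by
    rw [← hd.degree_eq v, card_filter_mem_cliqueFinset_three_eq_iff]
    exact ⟨fun h => h (mem_univ v), fun h _ => h⟩

end Triangles

section Paths

variable {V : Type*} [Fintype V] [DecidableEq V] (G : SimpleGraph V) [DecidableRel G.Adj]

lemma exists_isPath_minDegree_le_length [Nonempty V] :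
    ∃ (u v : V) (p : G.Walk u v), p.IsPath ∧ G.minDegree ≤ p.length := by
  have : Nonempty (Σ u v, G.Path u v) := ⟨⟨Classical.arbitrary V, _, Path.nil⟩⟩
  obtain ⟨⟨u, v, p⟩, hmax⟩ := Finite.exists_max fun p : Σ u v, G.Path u v => p.2.2.1.length
  refine ⟨u, v, p, p.2, (G.minDegree_le_degree u).trans ?_⟩
  have hsub : G.neighborFinset u ⊆ p.1.support.toFinset.erase u := fun w hw => by
    rw [mem_neighborFinset] at hw
    refine mem_erase.2 ⟨hw.ne', List.mem_toFinset.2 (by_contra fun hw' => ?_)⟩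
    have := hmax ⟨w, v, ⟨.cons hw.symm p.1, p.2.cons hw'⟩⟩
    simp at this
  simpa [← card_neighborFinset_eq_degree, card_erase_of_mem,
    List.toFinset_card_of_nodup p.2.support_nodup] using card_le_card hsub

lemma pathGraph_isContained_pathGraph {k m : ℕ} (h : k ≤ m) : pathGraph k ⊑ pathGraph m :=
  ⟨Hom.toCopy ⟨Fin.castLE h, fun hab => by simpa [pathGraph_adj] using hab⟩
    (Fin.castLE_injective h)⟩

variable {G} in
lemma IsRegularOfDegree.add_two_le_of_free_pathGraph [Nonempty V] {d k : ℕ}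
    (hd : G.IsRegularOfDegree d) (hfree : (pathGraph k).Free G) : d + 2 ≤ k := by
  by_contra! hk
  obtain ⟨u, v, p, hp, hlen⟩ := G.exists_isPath_minDegree_le_length
  rw [hd.minDegree_eq] at hlen
  exact hfree ((pathGraph_isContained_pathGraph (by omega)).trans hp.isContained_pathGraph)

end Paths

section DisjUnion

variable {α ι V W : Type*} {G : SimpleGraph V}

instance [DecidableEq ι] (f : ι → SimpleGraph W) [∀ i, DecidableRel (f i).Adj] :
    DecidableRel (disjUnion f).Adj :=
  fun x y => inferInstanceAs (Decidable (x.1 = y.1 ∧ (f x.1).Adj x.2 y.2))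

lemma disjUnion_top_adj {x y : ι × W} :
    (disjUnion fun _ : ι => (⊤ : SimpleGraph W)).Adj x y ↔ x.1 = y.1 ∧ x ≠ y :=
  ⟨fun h => ⟨h.1, fun e => h.2 (congrArg Prod.snd e)⟩,
    fun h => ⟨h.1, fun e => h.2 (Prod.ext h.1 e)⟩⟩

lemma isClique_neighborSet_disjUnion_top (x : ι × W) :
    (disjUnion fun _ : ι => (⊤ : SimpleGraph W)).IsClique
      ((disjUnion fun _ : ι => (⊤ : SimpleGraph W)).neighborSet x) := fun _ hy _ hz hyz =>
  disjUnion_top_adj.2 ⟨(disjUnion_top_adj.1 hy).1.symm.trans (disjUnion_top_adj.1 hz).1, hyz⟩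

lemma isRegularOfDegree_disjUnion_top [Fintype ι] [DecidableEq ι] [Fintype W] [DecidableEq W] :
    (disjUnion fun _ : ι => (⊤ : SimpleGraph W)).IsRegularOfDegree (Fintype.card W - 1) := by
  intro x
  have : (disjUnion fun _ : ι => (⊤ : SimpleGraph W)).neighborFinset x =
      ({x.1} ×ˢ univ).erase x := by
    ext y
    simp only [mem_neighborFinset, disjUnion_top_adj, mem_erase, mem_product, mem_singleton,
      mem_univ, true_and, eq_comm (a := x.1), ne_comm (a := x), and_comm]
  rw [← card_neighborFinset_eq_degree, this, card_erase_of_mem (by simp), card_product,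
    card_singleton, one_mul, card_univ]

lemma free_disjUnion_of_connected [Fintype α] [Fintype W] {F : SimpleGraph α} (hF : F.Connected)
    (f : ι → SimpleGraph W) (hcard : Fintype.card W < Fintype.card α) : F.Free (disjUnion f) := by
  rintro ⟨c⟩
  have hblock : ∀ a b, (c a).1 = (c b).1 := fun a b => by
    obtain ⟨p⟩ := hF.preconnected a b
    induction p with
    | nil => rfl
    | cons h _ ih => exact (c.toHom.map_adj h).1.trans ih
  have hinj : Function.Injective fun a => (c a).2 := fun a b h =>
    c.injective (Prod.ext (hblock a b) h)
  exact hcard.not_ge (Fintype.card_le_of_injective _ hinj)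

lemma reachable_iff_eq_or_adj_of_isClique_neighborSet
    (h : ∀ v, G.IsClique (G.neighborSet v)) {u v : V} : G.Reachable u v ↔ u = v ∨ G.Adj u v := by
  refine ⟨?_, ?_⟩
  · rintro ⟨p⟩
    induction p with
    | nil => exact .inl rfl
    | @cons a b c hab _ ih =>
      obtain rfl | hbc := ih
      · exact .inr hab
      · exact or_iff_not_imp_left.2 (h b hab.symm hbc)
  · rintro (rfl | hadj)
    exacts [.rfl, hadj.reachable]

lemma nonempty_iso_disjUnion_top [Fintype V] [DecidableRel G.Adj] {N K : ℕ} (hK : 0 < K)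
    (hcard : Fintype.card V = N * K) (hd : G.IsRegularOfDegree (K - 1))
    (h : ∀ v, G.IsClique (G.neighborSet v)) :
    Nonempty (G ≃g disjUnion fun _ : Fin N => (⊤ : SimpleGraph (Fin K))) := by
  classical
  have hreach := @reachable_iff_eq_or_adj_of_isClique_neighborSet _ G h
  have hfiber (c : G.ConnectedComponent) :
      Fintype.card {v // G.connectedComponentMk v = c} = K := by
    induction c using ConnectedComponent.ind with | h v => ?_
    have : ({w | G.connectedComponentMk w = G.connectedComponentMk v} : Finset V) =
        insert v (G.neighborFinset v) := by
      ext w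
      simp only [mem_filter, mem_univ, true_and, ConnectedComponent.eq, hreach, mem_insert,
        mem_neighborFinset, G.adj_comm v w]
    rw [Fintype.card_subtype, this, card_insert_of_notMem (by simp),
      card_neighborFinset_eq_degree, hd.degree_eq]
    omega
  obtain ⟨e, he⟩ := Fintype.exists_equiv_fin_prod_fin_of_card_fiber _ hK hfiber hcard
  refine ⟨⟨e, fun {u v} => ?_⟩⟩
  rw [disjUnion_top_adj, he, ConnectedComponent.eq, hreach, e.injective.ne_iff]
  exact ⟨fun ⟨h₁, h₂⟩ => h₁.resolve_left h₂, fun hadj => ⟨.inr hadj, hadj.ne⟩⟩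

end DisjUnion

section Extremal

variable {V : Type*} [Fintype V] {N K : ℕ}

lemma card_cliqueFinset_three_disjUnion_top :
    #((disjUnion fun _ : Fin N => (⊤ : SimpleGraph (Fin K))).cliqueFinset 3) = N * K.choose 3 := by
  have h := (isRegularOfDegree_disjUnion_top (ι := Fin N) (W := Fin K)
    ).three_mul_card_cliqueFinset_three_eq_iff.2
    isClique_neighborSet_disjUnion_top
  rw [Fintype.card_prod, Fintype.card_fin, Fintype.card_fin, mul_assoc,
    Nat.mul_sub_one_choose_two, mul_left_comm] at h
  exact Nat.eq_of_mul_eq_mul_left three_pos h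

variable [DecidableEq V] {G : SimpleGraph V} [DecidableRel G.Adj] {d : ℕ}

lemma IsRegularOfDegree.le_pred_of_free_pathGraph [Nonempty V] (hd : G.IsRegularOfDegree d)
    (hfree : (pathGraph (K + 1)).Free G) : d ≤ K - 1 := by
  have := hd.add_two_le_of_free_pathGraph hfree
  omega

lemma IsRegularOfDegree.card_cliqueFinset_three_le [Nonempty V] (hV : Fintype.card V = N * K)
    (hd : G.IsRegularOfDegree d) (hfree : (pathGraph (K + 1)).Free G) :
    #(G.cliqueFinset 3) ≤ N * K.choose 3 := by
  refine Nat.le_of_mul_le_mul_left ?_ three_pos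
  calc 3 * #(G.cliqueFinset 3)
    _ ≤ Fintype.card V * d.choose 2 := hd.three_mul_card_cliqueFinset_three_le
    _ ≤ Fintype.card V * (K - 1).choose 2 :=
      Nat.mul_le_mul_left _ (Nat.choose_le_choose 2 (hd.le_pred_of_free_pathGraph hfree))
    _ = 3 * (N * K.choose 3) := by rw [hV, mul_assoc, Nat.mul_sub_one_choose_two, mul_left_comm]

lemma IsRegularOfDegree.nonempty_iso_of_card_cliqueFinset_three_eq [Nonempty V] (hK : 3 ≤ K)
    (hV : Fintype.card V = N * K) (hd : G.IsRegularOfDegree d)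
    (hfree : (pathGraph (K + 1)).Free G) (heq : #(G.cliqueFinset 3) = N * K.choose 3) :
    Nonempty (G ≃g disjUnion fun _ : Fin N => (⊤ : SimpleGraph (Fin K))) := by
  have hcount : 3 * #(G.cliqueFinset 3) = Fintype.card V * (K - 1).choose 2 := by
    rw [heq, hV, mul_assoc, Nat.mul_sub_one_choose_two, mul_left_comm]
  obtain rfl : d = K - 1 := by
    refine (hd.le_pred_of_free_pathGraph hfree).eq_of_not_lt fun hlt => ?_
    have := Nat.mul_lt_mul_of_pos_left (Nat.choose_two_lt_choose_two hlt (by omega))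
      (Fintype.card_pos (α := V))
    have := hd.three_mul_card_cliqueFinset_three_le
    omega
  exact nonempty_iso_disjUnion_top (by omega) hV hd
    (hd.three_mul_card_cliqueFinset_three_eq_iff.1 hcount)

end Extremal

end SimpleGraph

section PathFreeRegular

variable {V : Type*} [Fintype V] {G : SimpleGraph V} {N K : ℕ}

lemma copyCount_triangle_le [Nonempty V] (hV : Fintype.card V = N * K)
    (hfree : FreeOf (pathGraph (K + 1)) G) (hreg : IsRegularGraph G) :
    _root_.copyCount (⊤ : SimpleGraph (Fin 3)) G ≤ N * K.choose 3 := by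
  classical
  obtain ⟨d, hd⟩ := (isRegularGraph_iff G).1 hreg
  rw [copyCount_top_eq_card_cliqueFinset]
  exact hd.card_cliqueFinset_three_le hV ((freeOf_iff_free _ _).1 hfree)

lemma nonempty_iso_disjUnion_top_of_copyCount_triangle_eq [Nonempty V] (hK : 3 ≤ K)
    (hV : Fintype.card V = N * K) (hfree : FreeOf (pathGraph (K + 1)) G)
    (hreg : IsRegularGraph G)
    (heq : _root_.copyCount (⊤ : SimpleGraph (Fin 3)) G = N * K.choose 3) :
    Nonempty (G ≃g disjUnion fun _ : Fin N => (⊤ : SimpleGraph (Fin K))) := by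
  classical
  obtain ⟨d, hd⟩ := (isRegularGraph_iff G).1 hreg
  rw [copyCount_top_eq_card_cliqueFinset] at heq
  exact hd.nonempty_iso_of_card_cliqueFinset_three_eq hK hV ((freeOf_iff_free _ _).1 hfree) heq

lemma exists_freeOf_pathGraph_isRegularGraph_copyCount_triangle_eq (hV : Fintype.card V = N * K) :
    ∃ G : SimpleGraph V, FreeOf (pathGraph (K + 1)) G ∧ IsRegularGraph G ∧
      _root_.copyCount (⊤ : SimpleGraph (Fin 3)) G = N * K.choose 3 := by
  classical
  let e : Fin N × Fin K ≃ V := Fintype.equivOfCardEq (by simp [hV])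
  let H := disjUnion fun _ : Fin N => (⊤ : SimpleGraph (Fin K))
  refine ⟨H.map e, ?_, ?_, ?_⟩
  · exact (freeOf_iff_free _ _).2 <| (free_congr_right (Iso.map e H)).1 <|
      free_disjUnion_of_connected (pathGraph_connected K) _ (by simp)
  · have hH : H.IsRegularOfDegree (K - 1) := by
      simpa using isRegularOfDegree_disjUnion_top (ι := Fin N) (W := Fin K)
    refine (isRegularGraph_iff _).2 ⟨K - 1, fun v => ?_⟩
    rw [← e.apply_symm_apply v]
    exact ((Iso.map e H).degree_eq _).trans (hH _)
  · rw [copyCount_top_eq_card_cliqueFinset, cliqueFinset_map_of_equiv, card_map,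
      card_cliqueFinset_three_disjUnion_top]

end PathFreeRegular

/-- For fixed `k ≥ 4` and all sufficiently large `n` divisible by `k-1`,
`rex(n, K₃, P_k) = (n/(k-1))·C(k-1,3)`, and the unique extremal graph is the disjoint
union of `n/(k-1)` copies of `K_{k-1}`. -/
theorem rex_triangle_path_div (k : ℕ) (hk : 4 ≤ k) :
    ∃ n₀ : ℕ, ∀ n : ℕ, n₀ ≤ n → (k - 1) ∣ n →
      rex n (⊤ : SimpleGraph (Fin 3)) (pathGraph k) = (n / (k - 1)) * Nat.choose (k - 1) 3 ∧
      ∀ G : SimpleGraph (Fin n), FreeOf (pathGraph k) G → IsRegularGraph G →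
        _root_.copyCount (⊤ : SimpleGraph (Fin 3)) G = rex n (⊤ : SimpleGraph (Fin 3)) (pathGraph k) →
        Nonempty (G ≃g disjUnion (fun _ : Fin (n / (k - 1)) => (⊤ : SimpleGraph (Fin (k - 1))))) := by
  obtain ⟨K, rfl⟩ : ∃ K, k = K + 1 := ⟨k - 1, by omega⟩
  rw [Nat.add_sub_cancel]
  refine ⟨1, fun n hn ⟨N, hN⟩ => ?_⟩
  have hNK : n / K = N := by rw [hN, Nat.mul_div_cancel_left N (by omega)]
  have hV : Fintype.card (Fin n) = N * K := by rw [Fintype.card_fin, hN, mul_comm]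
  have : Nonempty (Fin n) := ⟨⟨0, hn⟩⟩
  rw [hNK]
  obtain ⟨G₀, hfree₀, hreg₀, hcount₀⟩ :=
    exists_freeOf_pathGraph_isRegularGraph_copyCount_triangle_eq hV
  have hrex : rex n (⊤ : SimpleGraph (Fin 3)) (pathGraph (K + 1)) = N * K.choose 3 :=
    IsGreatest.csSup_eq ⟨⟨G₀, hfree₀, hreg₀, hcount₀⟩, by
      rintro _ ⟨G, hfree, hreg, rfl⟩
      exact copyCount_triangle_le hV hfree hreg⟩
  exact ⟨hrex, fun G hfree hreg hcount =>
    nonempty_iso_disjUnion_top_of_copyCount_triangle_eq (by omega) hV hfree hreg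
      (hcount.trans hrex)⟩
end

section
/- For every positive integer r and every integer g ≥ 3 there exists n_0 such that for all n ≥ n_0 with n·r even, there exists an n-vertex r-regular graph with girth at least g. -/
/-!
Erdős–Sachs: among the graphs on `V` with maximum degree at most `r` and girth at least `g`, one
with the most edges is `r`-regular as soon as `|V| > (r + 1) ^ (2g)` and `|V| r` is even.
Suppose `v` has degree `< r`. If another deficient vertex `w` has `d(v, w) ≥ g - 1`, the edge `vw`
closes no cycle shorter than `g`. Otherwise every deficient vertex lies within distance `g - 2`
of `v`; a parity count gives one, `v' ≠ v`, unless `v` lacks two edges, and then `v' = v`.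
The ball of radius `2g` around `v` has at most `(r + 1) ^ (2g)` vertices, so some `x` is farther
away; `x` has full degree, and for a neighbour `y` of `x` the switch deleting `xy` and adding
`vx`, `v'y` keeps both constraints and gains an edge. Either way maximality is contradicted.
-/

namespace SimpleGraph

variable {V : Type*} {G H : SimpleGraph V} {a b v v' w x y z : V} {r g : ℕ}

def MaxDegreeLE (G : SimpleGraph V) (r : ℕ) : Prop := ∀ v, (G.neighborSet v).ncard ≤ r

lemma ncard_neighborSet_edge_le (a b w : V) : ((edge a b).neighborSet w).ncard ≤ 1 := by
  classical
  have hsub : (edge a b).neighborSet w ⊆ {if w = a then b else a} := by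
    intro u hu
    rw [mem_neighborSet, edge_adj] at hu
    split_ifs <;> grind
  simpa using Set.ncard_le_ncard hsub

lemma ncard_neighborSet_sup_edge_le (G : SimpleGraph V) (a b w : V) :
    ((G ⊔ edge a b).neighborSet w).ncard ≤ (G.neighborSet w).ncard + 1 :=
  (Set.ncard_union_le _ _).trans (Nat.add_le_add_left (ncard_neighborSet_edge_le a b w) _)

lemma neighborSet_sup_edge_of_ne (hwa : w ≠ a) (hwb : w ≠ b) :
    (G ⊔ edge a b).neighborSet w = G.neighborSet w := by
  ext u
  simp [edge_adj, hwa, hwb]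

lemma ncard_neighborSet_sdiff_edge_lt [Finite V] (h : G.Adj x y) :
    ((G \ edge x y).neighborSet x).ncard < (G.neighborSet x).ncard := by
  refine Set.ncard_lt_ncard ⟨Set.sdiff_subset, fun hsub ↦ (hsub h).2 ?_⟩
  simp [edge_adj, h.ne]

lemma ncard_neighborSet_le_of_le [Finite V] (h : H ≤ G) (v : V) :
    (H.neighborSet v).ncard ≤ (G.neighborSet v).ncard :=
  Set.ncard_le_ncard (neighborSet_mono h v)

lemma MaxDegreeLE.sup_edge [Finite V] (hG : G.MaxDegreeLE r) (ha : (G.neighborSet a).ncard < r)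
    (hb : (G.neighborSet b).ncard < r) : (G ⊔ edge a b).MaxDegreeLE r := by
  intro w
  by_cases hw : w = a ∨ w = b
  · have := G.ncard_neighborSet_sup_edge_le a b w
    rcases hw with rfl | rfl <;> omega
  · push Not at hw
    rw [neighborSet_sup_edge_of_ne hw.1 hw.2]
    exact hG w

lemma ncard_edgeSet_sup_edge [Finite V] (hab : a ≠ b) (hn : ¬G.Adj a b) :
    (G ⊔ edge a b).edgeSet.ncard = G.edgeSet.ncard + 1 := by
  rw [edgeSet_sup, edgeSet_edge_of_ne hab, Set.union_singleton,
    Set.ncard_insert_of_notMem (show s(a, b) ∉ G.edgeSet from hn)]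

lemma ncard_edgeSet_sdiff_edge [Finite V] (h : G.Adj x y) :
    (G \ edge x y).edgeSet.ncard + 1 = G.edgeSet.ncard := by
  rw [edgeSet_sdiff, edgeSet_edge_of_ne h.ne,
    Set.ncard_sdiff_singleton_add_one (show s(x, y) ∈ G.edgeSet from h)]

lemma le_add_edist_of_forall_adj {f : V → ℕ∞} (hf : ∀ u u', G.Adj u u' → f u ≤ f u' + 1)
    (u v : V) : f u ≤ f v + G.edist u v := by
  obtain hr | hr := em (G.Reachable u v)
  · obtain ⟨p, hp⟩ := hr.exists_walk_length_eq_edist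
    rw [← hp]
    clear hp hr
    induction p with
    | nil => simp
    | cons h p ih =>
      rw [Walk.length_cons, Nat.cast_succ, ← add_assoc]
      exact (hf _ _ h).trans (by gcongr)
  · simp [edist_eq_top_of_not_reachable hr]

lemma edist_le_edist_add_one_add_edist (h : G.Adj x y) (a b : V) :
    G.edist a b ≤ G.edist a x + 1 + G.edist y b := by
  rw [← edist_eq_one_iff_adj.2 h]
  exact G.edist_triangle.trans (by gcongr; exact G.edist_triangle)

lemma min_edist_le_edist_sup_edge (a b u v : V) :
    min (G.edist u v) (min (G.edist u a + 1 + G.edist b v) (G.edist u b + 1 + G.edist a v)) ≤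
      (G ⊔ edge a b).edist u v := by
  let f : V → ℕ∞ := fun u ↦
    min (G.edist u v) (min (G.edist u a + 1 + G.edist b v) (G.edist u b + 1 + G.edist a v))
  suffices hf : ∀ u u', (G ⊔ edge a b).Adj u u' → f u ≤ f u' + 1 by
    simpa [f] using le_add_edist_of_forall_adj hf u v
  rintro u u' (h | h)
  · have hd : ∀ z, G.edist u z ≤ G.edist u' z + 1 := fun z ↦ by
      simpa [add_comm] using edist_le_edist_add_one_add_edist h u z
    simp only [f, ← min_add_add_right]
    refine min_le_min (hd v) (min_le_min ?_ ?_)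
    · calc _ ≤ G.edist u' a + 1 + 1 + G.edist b v := by gcongr; exact hd a
        _ = _ := by ring
    · calc _ ≤ G.edist u' b + 1 + 1 + G.edist a v := by gcongr; exact hd b
        _ = _ := by ring
  · rw [edge_adj] at h
    rcases h with ⟨⟨rfl, rfl⟩ | ⟨rfl, rfl⟩, -⟩
    · simp only [f, edist_self, zero_add, ← min_add_add_right]
      refine le_min (min_le_of_right_le (min_le_of_left_le (add_comm _ _).le)) (le_min ?_ ?_)
      · refine min_le_of_right_le (min_le_of_left_le (le_add_right ?_))
        rw [add_assoc]
        exact le_add_self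
      · exact min_le_of_left_le (le_add_right le_add_self)
    · simp only [f, edist_self, zero_add, ← min_add_add_right]
      refine le_min (min_le_of_right_le (min_le_of_right_le (add_comm _ _).le)) (le_min ?_ ?_)
      · exact min_le_of_left_le (le_add_right le_add_self)
      · refine min_le_of_right_le (min_le_of_right_le (le_add_right ?_))
        rw [add_assoc]
        exact le_add_self

lemma egirth_le_edist_sdiff_edge_add_one (h : G.Adj x y) :
    G.egirth ≤ (G \ edge x y).edist x y + 1 := by
  classical
  obtain hr | hr := em ((G \ edge x y).Reachable x y)
  · obtain ⟨p, hp⟩ := hr.exists_walk_length_eq_edist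
    have hxy : s(y, x) ∉ (p.bypass.mapLe sdiff_le).edges := by
      rw [Walk.edges_mapLe_eq_edges]
      intro he
      simpa [edge_adj] using p.bypass.edges_subset_edgeSet he
    have hcycle : (Walk.cons h.symm (p.bypass.mapLe sdiff_le)).IsCycle :=
      (Walk.cons_isCycle_iff _ _).2 ⟨(p.bypass_isPath).mapLe _, hxy⟩
    calc G.egirth ≤ (Walk.cons h.symm (p.bypass.mapLe sdiff_le)).length := egirth_le_length hcycle
      _ ≤ _ := by
        rw [Walk.length_cons, Walk.length_mapLe, ← hp]
        push_cast
        gcongr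
        exact p.length_bypass_le_length
  · simp [edist_eq_top_of_not_reachable hr]

lemma sup_edge_deleteEdges_le (G : SimpleGraph V) (a b u v : V) :
    (G ⊔ edge a b).deleteEdges {s(u, v)} ≤ (G \ edge u v) ⊔ edge a b := by
  change (G ⊔ edge a b) \ edge u v ≤ _
  rw [sup_sdiff]
  exact sup_le_sup_left sdiff_le _

lemma sup_edge_deleteEdges_self_le (G : SimpleGraph V) (a b : V) :
    (G ⊔ edge a b).deleteEdges {s(a, b)} ≤ G := by
  change (G ⊔ edge a b) \ edge a b ≤ _
  rw [sup_sdiff_right_self]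
  exact sdiff_le

lemma min_egirth_le_egirth_sup_edge (a b : V) :
    min G.egirth (G.edist a b + 1) ≤ (G ⊔ edge a b).egirth := by
  rw [le_egirth]
  rintro u (_ | ⟨h, p⟩) hc
  · exact absurd hc Walk.not_isCycle_nil
  rename_i u'
  -- removing the first edge `uu'` of the cycle leaves a path from `u'` to `u` avoiding it
  rw [Walk.cons_isCycle_iff] at hc
  rw [Walk.length_cons, Nat.cast_succ]
  rcases h with h | h
  · set G' := G \ edge u u'
    have hp := edist_le ((p.toDeleteEdge _ hc.2).mapLe (sup_edge_deleteEdges_le G a b u u'))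
    rw [Walk.length_mapLe, Walk.length_transfer] at hp
    have h₁ : G.egirth ≤ G'.edist u' u + 1 :=
      edist_comm (G := G') ▸ egirth_le_edist_sdiff_edge_add_one h
    have h₂ : G.edist a b ≤ G'.edist u' a + 1 + G'.edist b u :=
      calc G.edist a b ≤ G.edist a u' + 1 + G.edist u b :=
            edist_le_edist_add_one_add_edist h.symm a b
        _ ≤ G'.edist a u' + 1 + G'.edist u b := by gcongr <;> exact sdiff_le
        _ = _ := by rw [edist_comm (u := a), edist_comm (u := u)]
    have h₃ : G.edist a b ≤ G'.edist u' b + 1 + G'.edist a u :=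
      calc G.edist a b ≤ G.edist a u + 1 + G.edist u' b :=
            edist_le_edist_add_one_add_edist h a b
        _ ≤ G'.edist a u + 1 + G'.edist u' b := by gcongr <;> exact sdiff_le
        _ = _ := by ring
    calc min G.egirth (G.edist a b + 1)
        ≤ min (G'.edist u' u) (min (G'.edist u' a + 1 + G'.edist b u)
            (G'.edist u' b + 1 + G'.edist a u)) + 1 := by
          rw [← min_add_add_right, ← min_add_add_right]
          exact le_min (min_le_of_left_le h₁)
            (le_min (min_le_of_right_le (by gcongr)) (min_le_of_right_le (by gcongr)))
      _ ≤ p.length + 1 := by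
          gcongr
          exact (min_edist_le_edist_sup_edge a b u' u).trans hp
  · obtain ⟨habu, -⟩ := (adj_edge _ _).1 h
    rw [← habu] at hc
    have hp := edist_le ((p.toDeleteEdge _ hc.2).mapLe (sup_edge_deleteEdges_self_le G a b))
    rw [Walk.length_mapLe, Walk.length_transfer] at hp
    have hd : G.edist u' u = G.edist a b := by
      rcases Sym2.eq_iff.1 habu with ⟨rfl, rfl⟩ | ⟨rfl, rfl⟩
      · exact edist_comm
      · rfl
    rw [hd] at hp
    exact min_le_of_right_le (by gcongr)

lemma ball_add_one_subset (c : V) (k : ℕ) :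
    G.ball c (k + 1 + 1) ⊆ ⋃ w ∈ G.ball c (k + 1), insert w (G.neighborSet w) := by
  intro v hv
  rw [mem_ball] at hv
  obtain ⟨p, hp⟩ :=
    (reachable_of_edist_ne_top (hv.trans_le le_top).ne).exists_walk_length_eq_edist
  rw [Set.mem_iUnion₂]
  cases p with
  | nil => exact ⟨_, mem_ball_self (zero_lt_one.trans_le le_add_self), Set.mem_insert _ _⟩
  | cons h q =>
    refine ⟨_, ?_, Set.mem_insert_of_mem _ h.symm⟩
    rw [← hp, Walk.length_cons] at hv
    have hq : q.length < k + 1 := by exact_mod_cast (Nat.succ_lt_succ_iff.1 (by exact_mod_cast hv))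
    exact (edist_le q).trans_lt (by exact_mod_cast hq)

lemma ncard_ball_le [Finite V] (hG : G.MaxDegreeLE r) (c : V) :
    ∀ k : ℕ, (G.ball c (k + 1)).ncard ≤ (r + 1) ^ k
  | 0 => by simp
  | k + 1 => by
    classical
    have := Fintype.ofFinite V
    calc (G.ball c (k + 1 + 1)).ncard
        ≤ (⋃ w ∈ G.ball c (k + 1), insert w (G.neighborSet w)).ncard :=
          Set.ncard_le_ncard (ball_add_one_subset c k)
      _ ≤ ∑ w ∈ (G.ball c (k + 1)).toFinset, (insert w (G.neighborSet w)).ncard := by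
          simpa using (G.ball c (k + 1)).toFinset.set_ncard_biUnion_le _
      _ ≤ ∑ w ∈ (G.ball c (k + 1)).toFinset, (r + 1) :=
          Finset.sum_le_sum fun w _ ↦ (Set.ncard_insert_le _ _).trans (by gcongr; exact hG w)
      _ = (G.ball c (k + 1)).ncard * (r + 1) := by
          rw [Finset.sum_const, smul_eq_mul, Set.ncard_eq_toFinset_card']
      _ ≤ (r + 1) ^ (k + 1) := by
          rw [pow_succ]
          gcongr
          exact ncard_ball_le hG c k

lemma exists_lt_edist [Finite V] (hG : G.MaxDegreeLE r) (c : V) {k : ℕ}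
    (hk : (r + 1) ^ k < Nat.card V) : ∃ x, (k : ℕ∞) < G.edist c x := by
  by_contra! h
  have hball : G.ball c (k + 1) = Set.univ := Set.eq_univ_of_forall fun x ↦ by
    rw [mem_ball, edist_comm]
    exact (h x).trans_lt (by exact_mod_cast Nat.lt_succ_self k)
  have := ncard_ball_le hG c k
  rw [hball, Set.ncard_univ] at this
  omega

lemma even_sum_ncard_neighborSet [Fintype V] (G : SimpleGraph V) :
    Even (∑ v, (G.neighborSet v).ncard) := by
  classical
  simp only [Set.ncard_eq_toFinset_card', ← neighborFinset_def, card_neighborFinset_eq_degree,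
    sum_degrees_eq_twice_card_edges]
  exact even_two_mul _

lemma exists_ne_ncard_neighborSet_lt [Fintype V] (hG : G.MaxDegreeLE r)
    (heven : Even (Fintype.card V * r)) (hv : (G.neighborSet v).ncard + 1 = r) :
    ∃ w ≠ v, (G.neighborSet w).ncard < r := by
  classical
  by_contra! h
  have hsum : ∑ w, (G.neighborSet w).ncard + 1 = Fintype.card V * r := by
    rw [← Finset.add_sum_erase _ _ (Finset.mem_univ v),
      Finset.sum_congr rfl fun w hw ↦ (hG w).antisymm (h w (Finset.ne_of_mem_erase hw)),
      Finset.sum_const, Finset.card_erase_of_mem (Finset.mem_univ v), Finset.card_univ,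
      smul_eq_mul, add_right_comm, hv, Nat.sub_one_mul]
    have : r ≤ Fintype.card V * r := Nat.le_mul_of_pos_left r (Fintype.card_pos_iff.2 ⟨v⟩)
    omega
  rw [← hsum, Nat.even_add_one] at heven
  exact heven G.even_sum_ncard_neighborSet

lemma ne_and_not_adj_of_le_edist_add_one (hg : 3 ≤ g) (h : (g : ℕ∞) ≤ G.edist a b + 1) :
    a ≠ b ∧ ¬G.Adj a b := by
  have : ¬G.edist a b ≤ 1 := fun h₁ ↦ by
    have := h.trans (by gcongr : G.edist a b + 1 ≤ 1 + 1)
    norm_cast at this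
    omega
  rw [edist_le_one_iff_adj_or_eq] at this
  tauto

lemma le_edist_add_one_of_near_of_far (hnear : G.edist v v' + 1 < g)
    (hfar : 2 * g ≤ G.edist v z + 1) : (g : ℕ∞) ≤ G.edist v' z + 1 := by
  have := G.edist_triangle (u := v) (v := v') (w := z)
  generalize G.edist v v' = d₁ at *
  generalize G.edist v z = d₂ at *
  generalize G.edist v' z = d₃ at *
  enat_to_nat
  omega

lemma sup_edge_of_le_edist_add_one [Finite V] (hg : 3 ≤ g) (hG : G.MaxDegreeLE r)
    (hgirth : g ≤ G.egirth) (ha : (G.neighborSet a).ncard < r) (hb : (G.neighborSet b).ncard < r)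
    (hab : g ≤ G.edist a b + 1) :
    (G ⊔ edge a b).MaxDegreeLE r ∧ g ≤ (G ⊔ edge a b).egirth ∧
      (G ⊔ edge a b).edgeSet.ncard = G.edgeSet.ncard + 1 :=
  ⟨hG.sup_edge ha hb, (le_min hgirth hab).trans (min_egirth_le_egirth_sup_edge a b),
    ncard_edgeSet_sup_edge (ne_and_not_adj_of_le_edist_add_one hg hab).1
      (ne_and_not_adj_of_le_edist_add_one hg hab).2⟩

lemma le_edist_sdiff_edge_sup_edge_add_one (hgirth : g ≤ G.egirth) (hxy : G.Adj x y)
    (hv'x : g ≤ G.edist v' x + 1) (hv'y : g ≤ G.edist v' y + 1) :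
    g ≤ (G \ edge x y ⊔ edge v x).edist v' y + 1 := by
  set H := G \ edge x y
  calc (g : ℕ∞)
      ≤ min (H.edist v' y) (min (H.edist v' v + 1 + H.edist x y)
          (H.edist v' x + 1 + H.edist v y)) + 1 := by
        rw [← min_add_add_right, ← min_add_add_right]
        refine le_min (hv'y.trans (by gcongr; exact sdiff_le)) (le_min ?_ ?_)
        · calc (g : ℕ∞) ≤ G.egirth := hgirth
            _ ≤ H.edist x y + 1 := egirth_le_edist_sdiff_edge_add_one hxy
            _ ≤ _ := by gcongr; exact le_add_self
        · calc (g : ℕ∞) ≤ G.edist v' x + 1 := hv'x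
            _ ≤ H.edist v' x + 1 := by gcongr; exact sdiff_le
            _ ≤ _ := by gcongr; exact le_self_add.trans le_self_add
    _ ≤ (H ⊔ edge v x).edist v' y + 1 := by gcongr; exact min_edist_le_edist_sup_edge v x v' y

/-- The witness is `G \ edge x y ⊔ edge v x ⊔ edge v' y`. -/
lemma exists_switch [Finite V] (hg : 3 ≤ g) (hG : G.MaxDegreeLE r)
    (hgirth : g ≤ G.egirth) (hxy : G.Adj x y) (hv : (G.neighborSet v).ncard < r)
    (hv' : (G.neighborSet v').ncard < r) (hvv' : v = v' → (G.neighborSet v).ncard + 1 < r)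
    (hvx : g ≤ G.edist v x + 1) (hv'x : g ≤ G.edist v' x + 1) (hv'y : g ≤ G.edist v' y + 1) :
    ∃ K : SimpleGraph V,
      K.MaxDegreeLE r ∧ g ≤ K.egirth ∧ K.edgeSet.ncard = G.edgeSet.ncard + 1 := by
  set H := G \ edge x y
  have hHG : H ≤ G := sdiff_le
  have hH : H.MaxDegreeLE r := fun w ↦ (ncard_neighborSet_le_of_le hHG w).trans (hG w)
  have hHx : (H.neighborSet x).ncard < r := (ncard_neighborSet_sdiff_edge_lt hxy).trans_le (hG x)
  have hHy : (H.neighborSet y).ncard < r := by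
    have := ncard_neighborSet_sdiff_edge_lt hxy.symm
    rw [edge_comm] at this
    exact this.trans_le (hG y)
  obtain ⟨hH₁, hH₁girth, hH₁card⟩ := sup_edge_of_le_edist_add_one hg hH
    (hgirth.trans (egirth_anti hHG)) ((ncard_neighborSet_le_of_le hHG v).trans_lt hv) hHx
    (hvx.trans (by gcongr))
  set H₁ := H ⊔ edge v x
  have hv'x' : v' ≠ x := (ne_and_not_adj_of_le_edist_add_one hg hv'x).1
  have hyv : y ≠ v := by
    rintro rfl
    exact (ne_and_not_adj_of_le_edist_add_one hg hvx).2 hxy.symm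
  have hH₁v' : (H₁.neighborSet v').ncard < r := by
    rcases eq_or_ne v v' with rfl | hne
    · exact (H.ncard_neighborSet_sup_edge_le v x v).trans_lt
        (by have := ncard_neighborSet_le_of_le hHG v; have := hvv' rfl; omega)
    · rw [neighborSet_sup_edge_of_ne hne.symm hv'x']
      exact (ncard_neighborSet_le_of_le hHG v').trans_lt hv'
  have hH₁y : (H₁.neighborSet y).ncard < r := by
    rwa [neighborSet_sup_edge_of_ne hyv hxy.ne.symm]
  obtain ⟨hK, hKgirth, hKcard⟩ := sup_edge_of_le_edist_add_one hg hH₁ hH₁girth hH₁v'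
    hH₁y (le_edist_sdiff_edge_sup_edge_add_one hgirth hxy hv'x hv'y)
  have hHcard : H.edgeSet.ncard + 1 = G.edgeSet.ncard := ncard_edgeSet_sdiff_edge hxy
  exact ⟨_, hK, hKgirth, by rw [hKcard, hH₁card, hHcard]⟩

lemma exists_switch_of_forall_near [Fintype V] (hg : 3 ≤ g)
    (hV : (r + 1) ^ (2 * g) < Fintype.card V) (heven : Even (Fintype.card V * r))
    (hG : G.MaxDegreeLE r) (hgirth : g ≤ G.egirth) (hv : (G.neighborSet v).ncard < r)
    (hnear : ∀ w, (G.neighborSet w).ncard < r → w ≠ v → G.edist v w + 1 < g) :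
    ∃ K : SimpleGraph V,
      K.MaxDegreeLE r ∧ g ≤ K.egirth ∧ K.edgeSet.ncard = G.edgeSet.ncard + 1 := by
  obtain ⟨x, hx⟩ := exists_lt_edist hG v (k := 2 * g) (by rwa [Nat.card_eq_fintype_card])
  push_cast at hx
  have hxr : (G.neighborSet x).ncard = r := by
    refine (hG x).antisymm (not_lt.1 fun hxr ↦ ?_)
    have hxv : x ≠ v := by
      rintro rfl
      simp at hx
    have := hnear x hxr hxv
    generalize G.edist v x = d at *
    enat_to_nat
    omega
  obtain ⟨y, hxy⟩ : ∃ y, G.Adj x y :=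
    Set.nonempty_of_ncard_ne_zero (s := G.neighborSet x) (by omega)
  have hg₁ : G.edist v v + 1 < g := by
    simp only [edist_self, zero_add]
    exact_mod_cast (by omega : 1 < g)
  obtain ⟨v', hv', hvv', hvv'g⟩ : ∃ v', (G.neighborSet v').ncard < r ∧
      (v = v' → (G.neighborSet v).ncard + 1 < r) ∧ G.edist v v' + 1 < g := by
    by_cases h₂ : (G.neighborSet v).ncard + 1 < r
    · exact ⟨v, hv, fun _ ↦ h₂, hg₁⟩
    · obtain ⟨w, hwv, hw⟩ := exists_ne_ncard_neighborSet_lt (v := v) hG heven (by omega)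
      exact ⟨w, hw, fun h ↦ absurd h.symm hwv, hnear w hw hwv⟩
  have hfarx : 2 * (g : ℕ∞) ≤ G.edist v x + 1 := hx.le.trans le_self_add
  have hfary : 2 * (g : ℕ∞) ≤ G.edist v y + 1 :=
    hx.le.trans ((G.edist_triangle (v := y)).trans_eq (by rw [edist_eq_one_iff_adj.2 hxy.symm]))
  exact exists_switch hg hG hgirth hxy hv hv' hvv' (le_edist_add_one_of_near_of_far hg₁ hfarx)
    (le_edist_add_one_of_near_of_far hvv'g hfarx) (le_edist_add_one_of_near_of_far hvv'g hfary)

theorem ncard_neighborSet_eq_of_maximal [Fintype V] (hg : 3 ≤ g)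
    (hV : (r + 1) ^ (2 * g) < Fintype.card V) (heven : Even (Fintype.card V * r))
    (hG : G.MaxDegreeLE r) (hgirth : g ≤ G.egirth)
    (hmax : ∀ H : SimpleGraph V, H.MaxDegreeLE r → g ≤ H.egirth →
      H.edgeSet.ncard ≤ G.edgeSet.ncard) (v : V) :
    (G.neighborSet v).ncard = r := by
  refine (hG v).antisymm (not_lt.1 fun hv ↦ ?_)
  obtain ⟨K, hK, hKgirth, hKcard⟩ :
      ∃ K : SimpleGraph V,
        K.MaxDegreeLE r ∧ g ≤ K.egirth ∧ K.edgeSet.ncard = G.edgeSet.ncard + 1 := by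
    by_cases hfar : ∃ w, (G.neighborSet w).ncard < r ∧ w ≠ v ∧ g ≤ G.edist v w + 1
    · obtain ⟨w, hw, -, hvw⟩ := hfar
      exact ⟨_, sup_edge_of_le_edist_add_one hg hG hgirth hv hw hvw⟩
    · push Not at hfar
      exact exists_switch_of_forall_near hg hV heven hG hgirth hv hfar
  have := hmax K hK hKgirth
  omega

theorem exists_regular_le_egirth [Fintype V] (hg : 3 ≤ g)
    (hV : (r + 1) ^ (2 * g) < Fintype.card V) (heven : Even (Fintype.card V * r)) :
    ∃ G : SimpleGraph V, (∀ v, (G.neighborSet v).ncard = r) ∧ g ≤ G.egirth := by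
  obtain ⟨G, ⟨hG, hgirth⟩, hmax⟩ := Set.exists_max_image
    {G : SimpleGraph V | G.MaxDegreeLE r ∧ g ≤ G.egirth} (fun G ↦ G.edgeSet.ncard)
    (Set.toFinite _) ⟨⊥, fun v ↦ by simp, by simp⟩
  refine ⟨G, ncard_neighborSet_eq_of_maximal hg hV heven hG hgirth ?_, hgirth⟩
  exact fun H hH hHg ↦ hmax H ⟨hH, hHg⟩

end SimpleGraph

theorem exists_regular_high_girth_general (r g : ℕ) (hg : 3 ≤ g) :
    ∃ n₀ : ℕ, ∀ n : ℕ, n₀ ≤ n → Even (n * r) →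
      ∃ G : SimpleGraph (Fin n),
        (∀ v : Fin n, Nat.card (G.neighborSet v) = r) ∧ (g : ℕ∞) ≤ G.egirth := by
  refine ⟨(r + 1) ^ (2 * g) + 1, fun n hn heven ↦ ?_⟩
  obtain ⟨G, hreg, hgirth⟩ := SimpleGraph.exists_regular_le_egirth (V := Fin n) (r := r) hg
    (by rw [Fintype.card_fin]; omega) (by rwa [Fintype.card_fin])
  exact ⟨G, hreg, hgirth⟩

/-- **Erdős–Sachs corollary.** For every `r ≥ 1` and `g ≥ 3`, for all
sufficiently large `n` with `n·r` even, there is an `n`-vertex `r`-regular graph of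
girth at least `g`. -/
theorem exists_regular_high_girth (r g : ℕ) (hr : 1 ≤ r) (hg : 3 ≤ g) :
    ∃ n₀ : ℕ, ∀ n : ℕ, n₀ ≤ n → Even (n * r) →
      ∃ G : SimpleGraph (Fin n),
        (∀ v : Fin n, Nat.card (G.neighborSet v) = r) ∧ (g : ℕ∞) ≤ G.egirth :=
  exists_regular_high_girth_general r g hg
end

section
/- For every ε > 0 there exist δ > 0 and n_0 such that the following holds for every odd n ≥ n_0: if G is a d-regular triangle-free graph on n vertices with d ≥ (2/5 - δ)·n, then V(G) contains pairwise disjoint sets V_1, V_2, V_3, V_4, V_5, each of size at least (1/5 - ε)·n, such that (with indices taken modulo 5) G has no edge inside any V_i, no edge between V_i and V_{i+2}, and no edge between V_i and V_{i+3}, and every vertex of V_i has at least (1/5 - ε)·n neighbors in V_{i+1} and at least (1/5 - ε)·n neighbors in V_{i+4}; in particular, G is obtained by deleting some edges of an n-vertex blow-up of the 5-cycle C_5. -/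
/-!
A `d`-regular graph with `d > 0` on an odd number of vertices is not bipartite, so it has an odd
closed walk. In a shortest one, of length `ℓ`, every vertex is adjacent to at most two of its
positions (a third neighbour would give a shorter odd closed walk), hence `ℓ d ≤ 2n`; since `d` is
close to `2n/5` and `G` is triangle-free, `ℓ = 5`. Given a pentagon `x₀ … x₄`, let
`Wᵢ = N(xᵢ₋₁) ∩ N(xᵢ₊₁)` and let `B` be the vertices outside all `Wᵢ`. Counting the
neighbourhoods of the `xᵢ` gives `5d + |B| ≤ 2n`, and `N(xᵢ) ⊆ Wᵢ₋₁ ∪ Wᵢ₊₁ ∪ B`. With these two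
inequalities, comparing disjoint neighbourhoods shows that every vertex `v` has neighbours in
exactly two classes, `Wₖ₋₁` and `Wₖ₊₁`; sending `v` to `k` is a homomorphism onto the pentagon.
Each fibre of a surjective homomorphism onto `C₅` has size at least `3d - n`, which is
`(1/5 - O(δ)) n`, and so has each half of the neighbourhood of a vertex.
-/

open Finset

theorem Finset.card_add_card_add_card_le {α : Type*} [Fintype α] [DecidableEq α]
    {A B C : Finset α} (hAB : Disjoint A B) (hAC : Disjoint A C) (hBC : Disjoint B C) :
    #A + #B + #C ≤ Fintype.card α := by
  rw [← card_union_of_disjoint hAB, ← card_union_of_disjoint (disjoint_union_left.2 ⟨hAC, hBC⟩)]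
  exact card_le_univ _

namespace SimpleGraph

variable {V : Type*} {G : SimpleGraph V}

theorem CliqueFree.not_adj_of_adj_of_adj (htf : G.CliqueFree 3) {u v w : V} (hu : G.Adj v u)
    (hw : G.Adj v w) : ¬G.Adj u w :=
  fun huw => isIndepSet_neighborSet_of_triangleFree _ htf v hu hw huw.ne huw

theorem CliqueFree.disjoint_neighborFinset [Fintype V] [DecidableEq V] [DecidableRel G.Adj]
    (htf : G.CliqueFree 3) {u v : V} (huv : G.Adj u v) :
    Disjoint (G.neighborFinset u) (G.neighborFinset v) := by
  rw [Finset.disjoint_left]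
  intro w hu hv
  rw [mem_neighborFinset] at hu hv
  exact htf.not_adj_of_adj_of_adj hu huv hv.symm

namespace Walk

variable {u v w : V}

theorem exists_loop_length_eq_sub_add_two (p : G.Walk u w) {a b : ℕ} (hab : a ≤ b)
    (hb : b ≤ p.length) (ha : G.Adj v (p.getVert a)) (hb' : G.Adj v (p.getVert b)) :
    ∃ q : G.Walk v v, q.length = b - a + 2 := by
  have hend : (p.drop a).getVert (b - a) = p.getVert b := by
    rw [drop_getVert, Nat.add_sub_cancel' hab]
  refine ⟨.cons ha ((((p.drop a).take (b - a)).copy rfl hend).concat hb'.symm), ?_⟩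
  simp only [length_cons, length_concat, length_copy, take_length, drop_length]
  omega

theorem exists_loop_length_eq_length_sub_add_two (p : G.Walk u u) {a b : ℕ} (hab : a ≤ b)
    (ha : G.Adj v (p.getVert a)) (hb : G.Adj v (p.getVert b)) (hbl : b ≤ p.length) :
    ∃ q : G.Walk v v, q.length = p.length - (b - a) + 2 := by
  refine ⟨.cons hb (((p.drop b).append (p.take a)).concat ha.symm), ?_⟩
  simp only [length_cons, length_concat, length_append, drop_length, take_length]
  omega

theorem sub_eq_two_or_eq_length_sub_two (p : G.Walk u u) (hodd : Odd p.length)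
    (hmin : ∀ (w : V) (q : G.Walk w w), Odd q.length → p.length ≤ q.length) {a b : ℕ}
    (hab : a < b) (hb : b < p.length) (ha : G.Adj v (p.getVert a))
    (hb' : G.Adj v (p.getVert b)) : b - a = 2 ∨ b - a = p.length - 2 := by
  obtain ⟨q₁, hq₁⟩ := p.exists_loop_length_eq_sub_add_two hab.le hb.le ha hb'
  obtain ⟨q₂, hq₂⟩ := p.exists_loop_length_eq_length_sub_add_two hab.le ha hb' hb.le
  -- `q₁.length + q₂.length = p.length + 4` is odd, so one of the two loops is odd
  rcases Nat.even_or_odd (b - a) with hev | hodd'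
  · have := hmin v q₂ (by rw [hq₂]; grind)
    grind
  · have := hmin v q₁ (by rw [hq₁]; grind)
    grind

theorem card_filter_adj_getVert_le_two [DecidableRel G.Adj] (p : G.Walk u u)
    (hodd : Odd p.length) (hmin : ∀ (w : V) (q : G.Walk w w), Odd q.length → p.length ≤ q.length)
    (h3 : p.length ≠ 3) (v : V) :
    #{i ∈ range p.length | G.Adj (p.getVert i) v} ≤ 2 := by
  have key : ∀ a b, a ≠ b → a < p.length → b < p.length → G.Adj (p.getVert a) v →
      G.Adj (p.getVert b) v → (a - b = 2 ∨ a - b = p.length - 2 ∨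
        b - a = 2 ∨ b - a = p.length - 2) := by
    intro a b hne ha hb hva hvb
    rcases hne.lt_or_gt with h | h
    · have := p.sub_eq_two_or_eq_length_sub_two hodd hmin h hb hva.symm hvb.symm
      omega
    · have := p.sub_eq_two_or_eq_length_sub_two hodd hmin h ha hvb.symm hva.symm
      omega
  by_contra! h
  obtain ⟨a, ha, b, hb, c, hc, hab, hac, hbc⟩ := two_lt_card.mp h
  simp only [mem_filter, mem_range] at ha hb hc
  have := key a b hab ha.1 hb.1 ha.2 hb.2
  have := key a c hac ha.1 hc.1 ha.2 hc.2
  have := key b c hbc hb.1 hc.1 hb.2 hc.2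
  -- three pairwise gaps in `{2, ℓ - 2}` are impossible for odd `ℓ ≠ 3`
  obtain ⟨m, hm⟩ := hodd
  omega

theorem length_mul_le_card_mul_two [Fintype V] [DecidableRel G.Adj] {d : ℕ}
    (hd : ∀ v, d ≤ G.degree v) (p : G.Walk u u) (hodd : Odd p.length)
    (hmin : ∀ (w : V) (q : G.Walk w w), Odd q.length → p.length ≤ q.length)
    (h3 : p.length ≠ 3) : p.length * d ≤ Fintype.card V * 2 := by
  have := card_mul_le_card_mul (fun i v => G.Adj (p.getVert i) v) (s := range p.length)
    (t := univ) (m := d) (n := 2) (fun i _ => ?_)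
    (fun v _ => p.card_filter_adj_getVert_le_two hodd hmin h3 v)
  · simpa using this
  · simpa [bipartiteAbove, ← neighborFinset_eq_filter] using hd _

end Walk

theorem exists_shortest_odd_loop (h : ¬G.IsBipartite) :
    ∃ (u : V) (p : G.Walk u u), Odd p.length ∧
      ∀ (w : V) (q : G.Walk w w), Odd q.length → p.length ≤ q.length := by
  classical
  have hex : ∃ ℓ, ∃ (u : V) (p : G.Walk u u), Odd p.length ∧ p.length = ℓ := by
    simpa [two_colorable_iff_forall_loop_even] using h
  obtain ⟨u, p, hodd, hp⟩ := Nat.find_spec hex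
  exact ⟨u, p, hodd, fun w q hq => hp ▸ Nat.find_min' hex ⟨w, q, hq, rfl⟩⟩

theorem exists_pentagon [Fintype V] [DecidableRel G.Adj] {d : ℕ} (htf : G.CliqueFree 3)
    (hbip : ¬G.IsBipartite) (hd : ∀ v, d ≤ G.degree v) (h7 : 2 * Fintype.card V < 7 * d) :
    ∃ x : ZMod 5 → V, ∀ i, G.Adj (x i) (x (i + 1)) := by
  obtain ⟨u, p, hodd, hmin⟩ := exists_shortest_odd_loop hbip
  have hadj : ∀ i < p.length, G.Adj (p.getVert i) (p.getVert (i + 1)) :=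
    fun i hi => p.adj_getVert_succ hi
  have hne1 : p.length ≠ 1 := fun h1 => by
    simpa [← h1] using hadj 0 (by omega)
  have hne3 : p.length ≠ 3 := fun h3 => by
    have h20 := hadj 2 (by omega)
    rw [show 2 + 1 = p.length from h3.symm, Walk.getVert_length] at h20
    have := htf.not_adj_of_adj_of_adj (hadj 0 (by omega)).symm (hadj 1 (by omega))
    exact this (by simpa using h20.symm)
  have h5 : p.length = 5 := by
    have := p.length_mul_le_card_mul_two hd hodd hmin hne3
    obtain ⟨m, hm⟩ := hodd
    have : p.length < 7 := by nlinarith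
    omega
  have hx : ∀ k < 5, G.Adj (p.getVert k) (p.getVert ((k + 1) % 5)) := by
    intro k hk
    have := hadj k (by omega)
    rcases (show k < 4 ∨ k = 4 by omega) with hk4 | rfl
    · rwa [Nat.mod_eq_of_lt (by omega)]
    · rw [show 4 + 1 = p.length by omega, Walk.getVert_length] at this
      simpa using this
  have hval : ∀ i : ZMod 5, (i + 1).val = (i.val + 1) % 5 := by decide
  refine ⟨fun i => p.getVert i.val, fun i => ?_⟩
  simpa only [hval] using hx i.val (ZMod.val_lt i)

theorem IsRegularOfDegree.not_isBipartite_of_odd_card [Fintype V] [DecidableRel G.Adj] {d : ℕ}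
    (hreg : G.IsRegularOfDegree d) (hd : d ≠ 0) (hodd : Odd (Fintype.card V)) :
    ¬G.IsBipartite := by
  classical
  intro hbip
  obtain ⟨s, t, hst⟩ := hbip.exists_isBipartiteWith
  have hst' : G.IsBipartiteWith ↑s.toFinset ↑t.toFinset := by simpa using hst
  have hsum := isBipartiteWith_sum_degrees_eq hst'
  simp only [hreg.degree_eq, sum_const, smul_eq_mul] at hsum
  have hcover : s.toFinset ∪ t.toFinset = univ := by
    refine eq_univ_of_forall fun v => ?_
    obtain ⟨w, hvw⟩ := (G.degree_pos_iff_exists_adj v).mp (by rw [hreg.degree_eq]; omega)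
    rcases hst.mem_of_adj hvw with h | h <;> simp [h.1]
  have hcard := card_union_of_disjoint (Set.disjoint_toFinset.mpr hst.disjoint)
  rw [hcover, card_univ, Nat.eq_of_mul_eq_mul_right (Nat.pos_of_ne_zero hd) hsum] at hcard
  exact Nat.not_even_iff_odd.mpr hodd ⟨_, hcard⟩

def pentagon : SimpleGraph (ZMod 5) := fromRel fun i j => j = i + 1

theorem pentagon_adj {i j : ZMod 5} : pentagon.Adj i j ↔ j = i + 1 ∨ i = j + 1 := by
  simp only [pentagon, fromRel_adj, ne_eq, and_iff_right_iff_imp]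
  grind

theorem pentagon_exists_eq_pair (s : Finset (ZMod 5)) (hs : ∀ i ∈ s, i + 1 ∉ s)
    (h : 1 < #s) : ∃ k, s = {k - 1, k + 1} := by
  revert s; decide

theorem pentagon_exists_disjoint_of_not_adj {k l : ZMod 5} (h : ¬pentagon.Adj k l) :
    ∃ m, Disjoint ({m - 1, m + 1} : Finset (ZMod 5)) {k - 1, k + 1} ∧
      Disjoint ({m - 1, m + 1} : Finset (ZMod 5)) {l - 1, l + 1} := by
  rw [pentagon_adj] at h
  revert k l; decide

theorem pentagon_eq_of_pair_subset (i j : ZMod 5)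
    (h : ({i - 1, i + 1} : Finset (ZMod 5)) ⊆ {j - 1, j + 1}) : i = j := by
  simp only [insert_subset_iff, mem_insert, mem_singleton, singleton_subset_iff] at h
  grind

theorem pentagon_adj_of_disjoint {i j : ZMod 5}
    (h : Disjoint ({i - 1, i + 1} : Finset (ZMod 5)) {j - 1, j + 1}) : pentagon.Adj i j := by
  rw [pentagon_adj]
  revert i j; decide

section Pentagon

variable [DecidableRel G.Adj] {x : ZMod 5 → V} {d : ℕ}

variable (x) in
def pentagonPositions (v : V) : Finset (ZMod 5) := {i | G.Adj (x i) v}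

theorem mem_pentagonPositions {v : V} {i : ZMod 5} :
    i ∈ G.pentagonPositions x v ↔ G.Adj (x i) v := by
  simp [pentagonPositions]

theorem add_one_notMem_pentagonPositions (htf : G.CliqueFree 3)
    (hx : ∀ i, G.Adj (x i) (x (i + 1))) {v : V} {i : ZMod 5}
    (hi : i ∈ G.pentagonPositions x v) : i + 1 ∉ G.pentagonPositions x v := by
  rw [mem_pentagonPositions] at hi ⊢
  exact htf.not_adj_of_adj_of_adj (hx i) hi

theorem exists_pentagonPositions_eq_pair (htf : G.CliqueFree 3)
    (hx : ∀ i, G.Adj (x i) (x (i + 1))) {v : V} (h : 1 < #(G.pentagonPositions x v)) :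
    ∃ k, G.pentagonPositions x v = {k - 1, k + 1} :=
  pentagon_exists_eq_pair _ (fun _ => add_one_notMem_pentagonPositions htf hx) h

theorem disjoint_pentagonPositions (htf : G.CliqueFree 3) {u v : V} (huv : G.Adj u v) :
    Disjoint (G.pentagonPositions x u) (G.pentagonPositions x v) := by
  rw [Finset.disjoint_left]
  intro i hu hv
  rw [mem_pentagonPositions] at hu hv
  exact htf.not_adj_of_adj_of_adj hu hv huv

variable [Fintype V] [DecidableEq V]

variable (x) in
def pentagonClass (i : ZMod 5) : Finset V :=
  G.neighborFinset (x (i - 1)) ∩ G.neighborFinset (x (i + 1))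

variable (x) in
def pentagonRest : Finset V := {v | ∀ i, v ∉ G.pentagonClass x i}

variable (x) in
def seenClasses (v : V) : Finset (ZMod 5) :=
  {i | ¬Disjoint (G.neighborFinset v) (G.pentagonClass x i)}

theorem mem_pentagonClass {v : V} {i : ZMod 5} : v ∈ G.pentagonClass x i ↔
    i - 1 ∈ G.pentagonPositions x v ∧ i + 1 ∈ G.pentagonPositions x v := by
  simp [pentagonClass, mem_pentagonPositions]

theorem self_mem_pentagonClass (hx : ∀ i, G.Adj (x i) (x (i + 1))) (i : ZMod 5) :
    x i ∈ G.pentagonClass x i := by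
  rw [mem_pentagonClass, mem_pentagonPositions, mem_pentagonPositions]
  exact ⟨by simpa using hx (i - 1), (hx i).symm⟩

theorem pentagonPositions_eq_of_mem_pentagonClass (htf : G.CliqueFree 3)
    (hx : ∀ i, G.Adj (x i) (x (i + 1))) {v : V} {i : ZMod 5} (hv : v ∈ G.pentagonClass x i) :
    G.pentagonPositions x v = {i - 1, i + 1} := by
  rw [mem_pentagonClass] at hv
  have hne : i - 1 ≠ i + 1 := by grind
  obtain ⟨k, hk⟩ := exists_pentagonPositions_eq_pair htf hx
    (one_lt_card.mpr ⟨_, hv.1, _, hv.2, hne⟩)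
  rw [hk] at hv ⊢
  obtain rfl := pentagon_eq_of_pair_subset i k (by simpa [insert_subset_iff] using hv)
  rfl

theorem disjoint_pentagonClass (htf : G.CliqueFree 3) (hx : ∀ i, G.Adj (x i) (x (i + 1)))
    {i j : ZMod 5} (hij : i ≠ j) : Disjoint (G.pentagonClass x i) (G.pentagonClass x j) := by
  rw [Finset.disjoint_left]
  intro v hi hj
  have := (pentagonPositions_eq_of_mem_pentagonClass htf hx hi).symm.trans
    (pentagonPositions_eq_of_mem_pentagonClass htf hx hj)
  exact hij (pentagon_eq_of_pair_subset i j this.le)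

theorem pentagon_adj_of_mem_pentagonClass (htf : G.CliqueFree 3)
    (hx : ∀ i, G.Adj (x i) (x (i + 1))) {u v : V} {i j : ZMod 5}
    (hu : u ∈ G.pentagonClass x i) (hv : v ∈ G.pentagonClass x j) (huv : G.Adj u v) :
    pentagon.Adj i j := by
  have := disjoint_pentagonPositions (x := x) htf huv
  rw [pentagonPositions_eq_of_mem_pentagonClass htf hx hu,
    pentagonPositions_eq_of_mem_pentagonClass htf hx hv] at this
  exact pentagon_adj_of_disjoint this

theorem mem_pentagonClass_union_of_mem_neighborFinset (htf : G.CliqueFree 3)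
    (hx : ∀ i, G.Adj (x i) (x (i + 1))) {m : ZMod 5} {v : V}
    (hv : v ∈ G.neighborFinset (x m)) (hv' : v ∉ G.pentagonRest x) :
    v ∈ G.pentagonClass x (m - 1) ∪ G.pentagonClass x (m + 1) := by
  simp only [pentagonRest, mem_filter, mem_univ, true_and, not_forall, not_not] at hv'
  obtain ⟨j, hj⟩ := hv'
  have := pentagon_adj_of_mem_pentagonClass htf hx (self_mem_pentagonClass hx m) hj
    ((mem_neighborFinset _ _ _).mp hv)
  rw [pentagon_adj] at this
  rcases this with rfl | rfl
  · exact mem_union_right _ hj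
  · exact mem_union_left _ (by simpa using hj)

theorem degree_le_card_pentagonClass_union_add (htf : G.CliqueFree 3)
    (hx : ∀ i, G.Adj (x i) (x (i + 1))) (m : ZMod 5) :
    G.degree (x m) ≤
      #(G.pentagonClass x (m - 1) ∪ G.pentagonClass x (m + 1)) + #(G.pentagonRest x) := by
  rw [← card_neighborFinset_eq_degree]
  refine (card_le_card fun v hv => ?_).trans (card_union_le _ _)
  by_cases hrest : v ∈ G.pentagonRest x
  · exact mem_union_right _ hrest
  · exact mem_union_left _ (mem_pentagonClass_union_of_mem_neighborFinset htf hx hv hrest)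

theorem five_mul_add_card_pentagonRest_le (htf : G.CliqueFree 3)
    (hx : ∀ i, G.Adj (x i) (x (i + 1))) (hd : ∀ v, d ≤ G.degree v) :
    5 * d + #(G.pentagonRest x) ≤ 2 * Fintype.card V := by
  have hvert : ∀ v, #(G.pentagonPositions x v) + (if v ∈ G.pentagonRest x then 1 else 0) ≤ 2 := by
    intro v
    rcases le_or_gt #(G.pentagonPositions x v) 1 with h | h
    · split_ifs <;> omega
    · obtain ⟨k, hk⟩ := exists_pentagonPositions_eq_pair htf hx h
      have hv : v ∉ G.pentagonRest x := by
        simp only [pentagonRest, mem_filter, mem_univ, true_and, not_forall, not_not]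
        exact ⟨k, by simp [mem_pentagonClass, hk]⟩
      rw [if_neg hv, hk]
      exact card_le_two
  have hcount : ∑ i : ZMod 5, G.degree (x i) = ∑ v, #(G.pentagonPositions x v) := by
    simpa [bipartiteAbove, bipartiteBelow, pentagonPositions, ← neighborFinset_eq_filter] using
      sum_card_bipartiteAbove_eq_sum_card_bipartiteBelow (s := univ) (t := univ)
        (fun i v => G.Adj (x i) v)
  calc 5 * d + #(G.pentagonRest x)
      ≤ ∑ i : ZMod 5, G.degree (x i) + #(G.pentagonRest x) := by
        gcongr
        simpa using card_nsmul_le_sum univ (fun i => G.degree (x i)) d (fun i _ => hd _)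
    _ = ∑ v, (#(G.pentagonPositions x v) + if v ∈ G.pentagonRest x then 1 else 0) := by
        rw [hcount, sum_add_distrib, sum_boole, filter_mem_eq_inter, univ_inter, Nat.cast_id]
    _ ≤ ∑ _v : V, 2 := sum_le_sum fun v _ => hvert v
    _ = 2 * Fintype.card V := by rw [sum_const, card_univ, smul_eq_mul, mul_comm]

theorem disjoint_neighborFinset_pentagonClass_union {v : V} {m : ZMod 5}
    (h : Disjoint ({m - 1, m + 1} : Finset (ZMod 5)) (G.seenClasses x v)) :
    Disjoint (G.neighborFinset v) (G.pentagonClass x (m - 1) ∪ G.pentagonClass x (m + 1)) := by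
  have key : ∀ j ∈ ({m - 1, m + 1} : Finset (ZMod 5)),
      Disjoint (G.neighborFinset v) (G.pentagonClass x j) := fun j hj => by
    simpa [seenClasses] using Finset.disjoint_left.mp h hj
  exact disjoint_union_right.2 ⟨key _ (by simp), key _ (by simp)⟩

theorem add_one_notMem_seenClasses (htf : G.CliqueFree 3) (hx : ∀ i, G.Adj (x i) (x (i + 1)))
    (hd : ∀ v, d ≤ G.degree v) (h : 3 * Fintype.card V < 8 * d) {v : V} {i : ZMod 5}
    (hi : i ∈ G.seenClasses x v) : i + 1 ∉ G.seenClasses x v := by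
  intro hi'
  simp only [seenClasses, mem_filter, mem_univ, true_and, Finset.not_disjoint_iff] at hi hi'
  obtain ⟨u, hvu, hu⟩ := hi
  obtain ⟨w, hvw, hw⟩ := hi'
  rw [mem_neighborFinset] at hvu hvw
  have hcommon : ∀ z ∈ G.neighborFinset u, z ∈ G.neighborFinset w → z ∈ G.pentagonRest x := by
    intro z hzu hzw
    simp only [pentagonRest, mem_filter, mem_univ, true_and]
    intro j hj
    rw [mem_neighborFinset] at hzu hzw
    have h1 := pentagon_adj_of_mem_pentagonClass htf hx hu hj hzu
    have h2 := pentagon_adj_of_mem_pentagonClass htf hx hw hj hzw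
    rw [pentagon_adj] at h1 h2
    grind
  have hsum := card_add_card_add_card_le (htf.disjoint_neighborFinset hvu)
    ((htf.disjoint_neighborFinset hvw).mono_right sdiff_subset)
    (Finset.disjoint_left.2 fun z hzu hzw => (mem_sdiff.1 hzw).2 (hcommon z hzu (sdiff_subset hzw)))
  have hw' := card_le_card_sdiff_add_card (s := G.neighborFinset w) (t := G.pentagonRest x)
  have hrest := five_mul_add_card_pentagonRest_le htf hx hd
  simp only [card_neighborFinset_eq_degree] at hsum hw'
  have := hd v
  have := hd u
  have := hd w
  omega

theorem one_lt_card_seenClasses (htf : G.CliqueFree 3) (hx : ∀ i, G.Adj (x i) (x (i + 1)))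
    (hd : ∀ v, d ≤ G.degree v) (h : 5 * Fintype.card V < 13 * d) (v : V) :
    1 < #(G.seenClasses x v) := by
  by_contra! h1
  obtain ⟨j, hj⟩ := card_le_one_iff_subset_singleton.mp h1
  have hunseen : ∀ m, j ∉ ({m - 1, m + 1} : Finset (ZMod 5)) →
      Disjoint (G.neighborFinset v) (G.pentagonClass x (m - 1) ∪ G.pentagonClass x (m + 1)) :=
    fun m hm => disjoint_neighborFinset_pentagonClass_union
      ((disjoint_singleton_right.2 hm).mono_right hj)
  have hW : ∀ a b, a ≠ b → Disjoint (G.pentagonClass x a) (G.pentagonClass x b) :=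
    fun a b => disjoint_pentagonClass htf hx
  have hsum := card_add_card_add_card_le
    (hunseen (j + 2) (by simp only [mem_insert, mem_singleton]; grind))
    (hunseen (j + 3) (by simp only [mem_insert, mem_singleton]; grind))
    (disjoint_union_left.2 ⟨disjoint_union_right.2 ⟨hW _ _ (by grind), hW _ _ (by grind)⟩,
      disjoint_union_right.2 ⟨hW _ _ (by grind), hW _ _ (by grind)⟩⟩)
  have := degree_le_card_pentagonClass_union_add htf hx (j + 2)
  have := degree_le_card_pentagonClass_union_add htf hx (j + 3)
  have := five_mul_add_card_pentagonRest_le htf hx hd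
  rw [card_neighborFinset_eq_degree] at hsum
  have := hd v
  have := hd (x (j + 2))
  have := hd (x (j + 3))
  omega

theorem exists_seenClasses_eq_pair (htf : G.CliqueFree 3) (hx : ∀ i, G.Adj (x i) (x (i + 1)))
    (hd : ∀ v, d ≤ G.degree v) (h : 5 * Fintype.card V < 13 * d) (v : V) :
    ∃ k, G.seenClasses x v = {k - 1, k + 1} :=
  pentagon_exists_eq_pair _ (fun _ => add_one_notMem_seenClasses htf hx hd (by omega))
    (one_lt_card_seenClasses htf hx hd h v)

theorem exists_surjective_hom_pentagon (htf : G.CliqueFree 3)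
    (hx : ∀ i, G.Adj (x i) (x (i + 1))) (hd : ∀ v, d ≤ G.degree v)
    (h : 5 * Fintype.card V < 13 * d) : ∃ φ : G →g pentagon, Function.Surjective φ := by
  choose f hf using exists_seenClasses_eq_pair htf hx hd h
  have hadj : ∀ u v, G.Adj u v → pentagon.Adj (f u) (f v) := by
    intro u v huv
    by_contra hnadj
    -- `N(u)`, `N(v)` and `W(m-1) ∪ W(m+1)` are disjoint, so `3d - |B| ≤ n`
    obtain ⟨m, hmu, hmv⟩ := pentagon_exists_disjoint_of_not_adj hnadj
    have hsum := card_add_card_add_card_le (htf.disjoint_neighborFinset huv)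
      (disjoint_neighborFinset_pentagonClass_union (by rwa [hf u]))
      (disjoint_neighborFinset_pentagonClass_union (by rwa [hf v]))
    have := degree_le_card_pentagonClass_union_add htf hx m
    have := five_mul_add_card_pentagonRest_le htf hx hd
    simp only [card_neighborFinset_eq_degree] at hsum
    have := hd u
    have := hd v
    have := hd (x m)
    omega
  refine ⟨⟨f, hadj _ _⟩, fun i => ⟨x i, ?_⟩⟩
  have hseen : ∀ j, G.Adj (x i) (x j) → j ∈ G.seenClasses x (x i) := fun j hj => by
    simpa [seenClasses, Finset.not_disjoint_iff] using
      ⟨x j, hj, self_mem_pentagonClass hx j⟩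
  have h1 := hseen (i - 1) (by simpa using (hx (i - 1)).symm)
  have h2 := hseen (i + 1) (hx i)
  rw [hf] at h1 h2
  exact (pentagon_eq_of_pair_subset i _ (by simp [insert_subset_iff, h1, h2])).symm

end Pentagon

section Fiber

variable [Fintype V] [DecidableEq V] [DecidableRel G.Adj] {φ : G →g pentagon} {d : ℕ}

variable (φ) in
theorem neighborFinset_subset_filter (u : V) :
    G.neighborFinset u ⊆ univ.filter (φ · = φ u - 1) ∪ univ.filter (φ · = φ u + 1) := by
  intro v hv
  have := pentagon_adj.mp (φ.map_adj ((mem_neighborFinset _ _ _).mp hv))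
  simp only [mem_union, mem_filter, mem_univ, true_and]
  grind

theorem le_card_filter_add_card_filter (hφ : Function.Surjective φ)
    (hd : ∀ v, d ≤ G.degree v) (m : ZMod 5) :
    d ≤ #(univ.filter (φ · = m - 1)) + #(univ.filter (φ · = m + 1)) := by
  obtain ⟨u, rfl⟩ := hφ m
  calc d ≤ #(G.neighborFinset u) := (hd u).trans (card_neighborFinset_eq_degree G u).ge
    _ ≤ _ := (card_le_card (neighborFinset_subset_filter φ u)).trans (card_union_le _ _)

theorem card_filter_add_two_mul_le (hφ : Function.Surjective φ) (hd : ∀ v, d ≤ G.degree v)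
    (i : ZMod 5) : #(univ.filter (φ · = i)) + 2 * d ≤ Fintype.card V := by
  have hfib : ∀ a b : ZMod 5, a ≠ b → Disjoint (univ.filter (φ · = a)) (univ.filter (φ · = b)) :=
    fun a b hab => disjoint_filter.2 fun v _ ha hb => hab (ha.symm.trans hb)
  have hsum := card_add_card_add_card_le
    (disjoint_union_right.2 ⟨hfib i (i + 2 - 1) (by grind), hfib i (i + 2 + 1) (by grind)⟩)
    (disjoint_union_right.2 ⟨hfib i (i + 3 - 1) (by grind), hfib i (i + 3 + 1) (by grind)⟩)
    (disjoint_union_left.2 ⟨disjoint_union_right.2 ⟨hfib _ _ (by grind), hfib _ _ (by grind)⟩,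
      disjoint_union_right.2 ⟨hfib _ _ (by grind), hfib _ _ (by grind)⟩⟩)
  rw [card_union_of_disjoint (hfib _ _ (by grind)),
    card_union_of_disjoint (hfib _ _ (by grind))] at hsum
  have := le_card_filter_add_card_filter hφ hd (i + 2)
  have := le_card_filter_add_card_filter hφ hd (i + 3)
  omega

theorem three_mul_le_card_add_card_neighborFinset_inter (hφ : Function.Surjective φ)
    (hd : ∀ v, d ≤ G.degree v) {u : V} {j : ZMod 5} (hj : pentagon.Adj (φ u) j) :
    3 * d ≤ Fintype.card V + #(G.neighborFinset u ∩ univ.filter (φ · = j)) := by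
  -- `2 * φ u - j` is the other pentagon-neighbour of `φ u`
  have hsub : G.neighborFinset u ⊆
      (G.neighborFinset u ∩ univ.filter (φ · = j)) ∪ univ.filter (φ · = 2 * φ u - j) := by
    intro v hv
    have := neighborFinset_subset_filter φ u hv
    rw [pentagon_adj] at hj
    simp only [mem_union, mem_inter, mem_filter, mem_univ, true_and] at this ⊢
    grind
  have := (card_le_card hsub).trans (card_union_le _ _)
  have := card_filter_add_two_mul_le hφ hd (2 * φ u - j)
  have := (hd u).trans (card_neighborFinset_eq_degree G u).ge
  omega

theorem three_mul_le_card_add_card_filter (hφ : Function.Surjective φ)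
    (hd : ∀ v, d ≤ G.degree v) (i : ZMod 5) :
    3 * d ≤ Fintype.card V + #(univ.filter (φ · = i)) := by
  obtain ⟨u, hu⟩ := hφ (i + 1)
  have := three_mul_le_card_add_card_neighborFinset_inter hφ hd
    (show pentagon.Adj (φ u) i by rw [hu, pentagon_adj]; simp)
  have := card_le_card (inter_subset_right (s₁ := G.neighborFinset u) (s₂ := univ.filter (φ · = i)))
  omega

end Fiber

end SimpleGraph

theorem five_mul_lt_thirteen_mul_of_le {ε : ℝ} {n d : ℕ} (hn : 0 < n)
    (hd : (2 / 5 - min (ε / 3) (1 / 100)) * (n : ℝ) ≤ d) : 5 * n < 13 * d := by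
  have hn' : (0 : ℝ) < n := by exact_mod_cast hn
  have : min (ε / 3) (1 / 100) * (n : ℝ) ≤ 1 / 100 * n := by gcongr; exact min_le_right ..
  exact_mod_cast (by linarith : (5 * n : ℝ) < 13 * d)

theorem one_fifth_sub_mul_le_of_le {ε : ℝ} {n d c : ℕ}
    (hd : (2 / 5 - min (ε / 3) (1 / 100)) * (n : ℝ) ≤ d) (hc : 3 * d ≤ n + c) :
    (1 / 5 - ε) * (n : ℝ) ≤ c := by
  have : min (ε / 3) (1 / 100) * (n : ℝ) ≤ ε / 3 * n := by gcongr; exact min_le_left ..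
  have : (3 * d : ℝ) ≤ n + c := by exact_mod_cast hc
  linarith

open SimpleGraph

/-- **stability of the regular triangle-free problem for odd `n`.**
For every `ε > 0` there are `δ > 0` and `n₀` such that for every odd `n ≥ n₀`, every
`d`-regular triangle-free graph `G` on `n` vertices with `d ≥ (2/5 - δ)n` admits
pairwise disjoint vertex sets `V₀, …, V₄` (indexed by `ZMod 5`), each of size at least
`(1/5 - ε)n`, with no edges inside any `Vᵢ` nor between `Vᵢ` and `V_{i+2}` or `V_{i+3}`,
and every vertex of `Vᵢ` having at least `(1/5 - ε)n` neighbours in each of `V_{i+1}`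
and `V_{i+4}`; in particular `G` is a spanning subgraph of an `n`-vertex blow-up
of `C₅`. -/
theorem regular_triangleFree_stability :
    ∀ ε : ℝ, 0 < ε → ∃ δ : ℝ, 0 < δ ∧ ∃ n₀ : ℕ, ∀ n : ℕ, n₀ ≤ n → Odd n →
      ∀ (d : ℕ) (G : SimpleGraph (Fin n)),
        (∀ v : Fin n, Nat.card (G.neighborSet v) = d) →
        G.CliqueFree 3 →
        (2 / 5 - δ) * (n : ℝ) ≤ (d : ℝ) →
        (∃ V : ZMod 5 → Set (Fin n),
          (∀ i j : ZMod 5, i ≠ j → Disjoint (V i) (V j)) ∧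
          (∀ i : ZMod 5, (1 / 5 - ε) * (n : ℝ) ≤ ((V i).ncard : ℝ)) ∧
          (∀ i : ZMod 5, ∀ u ∈ V i, ∀ v ∈ V i, ¬ G.Adj u v) ∧
          (∀ i : ZMod 5, ∀ u ∈ V i, ∀ v ∈ V (i + 2), ¬ G.Adj u v) ∧
          (∀ i : ZMod 5, ∀ u ∈ V i, ∀ v ∈ V (i + 3), ¬ G.Adj u v) ∧
          (∀ i : ZMod 5, ∀ u ∈ V i,
            (1 / 5 - ε) * (n : ℝ) ≤ ((G.neighborSet u ∩ V (i + 1)).ncard : ℝ) ∧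
            (1 / 5 - ε) * (n : ℝ) ≤ ((G.neighborSet u ∩ V (i + 4)).ncard : ℝ))) ∧
        (∃ f : Fin n → ZMod 5, Function.Surjective f ∧
          ∀ u v : Fin n, G.Adj u v → f u = f v + 1 ∨ f v = f u + 1) := by
  intro ε hε
  refine ⟨min (ε / 3) (1 / 100), by positivity, 0, fun n _ hodd d G hdeg htf hd => ?_⟩
  classical
  have hreg : G.IsRegularOfDegree d := fun v => by
    rw [← card_neighborSet_eq_degree, ← Nat.card_eq_fintype_card, hdeg]
  have hdV : ∀ v, d ≤ G.degree v := fun v => (hreg v).ge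
  have h13 := five_mul_lt_thirteen_mul_of_le hodd.pos hd
  obtain ⟨x, hx⟩ := exists_pentagon htf
    (hreg.not_isBipartite_of_odd_card (by omega) (by simpa using hodd)) hdV (by simp; omega)
  obtain ⟨φ, hφ⟩ := exists_surjective_hom_pentagon htf hx hdV (by simpa using h13)
  have hbound : ∀ c : ℕ, 3 * d ≤ Fintype.card (Fin n) + c → (1 / 5 - ε) * (n : ℝ) ≤ c :=
    fun c hc => one_fifth_sub_mul_le_of_le hd (by simpa using hc)
  have hindep : ∀ i j, ¬pentagon.Adj i j →
      ∀ u ∈ {v | φ v = i}, ∀ v ∈ {v | φ v = j}, ¬G.Adj u v :=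
    fun i j hij u hu v hv huv => hij (hu ▸ hv ▸ φ.map_adj huv)
  refine ⟨⟨fun i => {v | φ v = i}, fun i j hij => ?_, fun i => ?_,
    fun i => hindep i i (by rw [pentagon_adj]; grind),
    fun i => hindep i (i + 2) (by rw [pentagon_adj]; grind),
    fun i => hindep i (i + 3) (by rw [pentagon_adj]; grind), fun i u hu => ?_⟩,
    φ, hφ, fun u v huv => (pentagon_adj.mp (φ.map_adj huv)).symm⟩
  · exact Set.disjoint_left.2 fun v hi hj => hij (hi.symm.trans hj)
  · simp only [Set.ncard_eq_toFinset_card', Set.toFinset_ofPred]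
    exact hbound _ (three_mul_le_card_add_card_filter hφ hdV i)
  · simp only [Set.ncard_eq_toFinset_card', Set.toFinset_inter, Set.toFinset_ofPred]
    exact ⟨hbound _ (three_mul_le_card_add_card_neighborFinset_inter hφ hdV
        (by rw [show φ u = i from hu, pentagon_adj]; grind)),
      hbound _ (three_mul_le_card_add_card_neighborFinset_inter hφ hdV
        (by rw [show φ u = i from hu, pentagon_adj]; grind))⟩
end

section
/- Let n be an odd positive integer and let G be a d-regular triangle-free graph on n vertices with d ≥ 1. Then d ≤ 2n/5. -/
/-!
A regular bipartite graph of positive degree has parts of equal size, so `G` is not bipartite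
and has an odd closed walk; take a shortest one, of length `L`, which is at least `5` because
`G` is triangle-free. Each gap between two neighbours of a vertex `v` along the walk closes up
through `v`, on the inside or on the outside, to an odd closed walk, so by minimality an odd gap
is at least `L - 2` and an even gap at most `2`. Three neighbours would leave three gaps summing
to `L` that cannot all obey this, so every vertex sees at most two positions of the walk and
double counting gives `L * d ≤ 2 * n`.
-/

open SimpleGraph Finset

namespace SimpleGraph

variable {V : Type*} {G : SimpleGraph V}

theorem IsRegularOfDegree.even_card_of_isBipartite [Fintype V] [DecidableRel G.Adj] {d : ℕ}
    (hreg : G.IsRegularOfDegree d) (hd : d ≠ 0) (hG : G.IsBipartite) :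
    Even (Fintype.card V) := by
  classical
  obtain ⟨s, t, hst⟩ := hG.exists_isBipartiteWith
  have hST : G.IsBipartiteWith ↑s.toFinset ↑t.toFinset := by simpa using hst
  have hcard : #s.toFinset = #t.toFinset := by
    have := isBipartiteWith_sum_degrees_eq hST
    simp only [hreg.degree_eq, sum_const, smul_eq_mul] at this
    exact Nat.eq_of_mul_eq_mul_right (Nat.pos_of_ne_zero hd) this
  have hcover : s.toFinset ∪ t.toFinset = univ := by
    refine eq_univ_of_forall fun v => ?_
    have hv : v ∈ G.support := by
      rw [← degree_pos_iff_mem_support, hreg.degree_eq]; omega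
    simpa using isBipartiteWith_support_subset hst hv
  rw [← card_univ, ← hcover, card_union_of_disjoint (by simpa using hst.disjoint), hcard]
  exact ⟨_, rfl⟩

theorem CliqueFree.five_le_length_of_odd_loop (hG : G.CliqueFree 3) {u : V} (w : G.Walk u u)
    (hw : Odd w.length) : 5 ≤ w.length := by
  classical
  rcases w with _ | ⟨h₁, _ | ⟨h₂, _ | ⟨h₃, _ | ⟨h₄, _ | ⟨h₅, w⟩⟩⟩⟩⟩
  · simp at hw
  · exact absurd h₁ G.irrefl
  · simp [Nat.odd_iff] at hw
  · exact absurd (is3Clique_triple_iff.mpr ⟨h₁, h₃.symm, h₂⟩) (hG _)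
  · simp [Nat.odd_iff] at hw
  · simp

namespace Walk

theorem exists_walk_getVert_getVert {u v : V} (p : G.Walk u v) {i j : ℕ} (hij : i ≤ j)
    (hj : j ≤ p.length) : ∃ q : G.Walk (p.getVert i) (p.getVert j), q.length = j - i := by
  refine ⟨((p.drop i).take (j - i)).copy rfl ?_, ?_⟩
  · rw [drop_getVert, Nat.add_sub_cancel' hij]
  · simp only [length_copy, take_length, drop_length]
    omega

theorem exists_walk_getVert_getVert_of_loop {u : V} (p : G.Walk u u) {i j : ℕ} (hij : i ≤ j)
    (hj : j ≤ p.length) :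
    ∃ q : G.Walk (p.getVert j) (p.getVert i), q.length = p.length - (j - i) :=
  ⟨(p.drop j).append (p.take i), by simp only [length_append, drop_length, take_length]; omega⟩

def IsShortestOddLoop {u : V} (p : G.Walk u u) : Prop :=
  Odd p.length ∧ ∀ ⦃x : V⦄ (c : G.Walk x x), Odd c.length → p.length ≤ c.length

namespace IsShortestOddLoop

variable {u v : V} {p : G.Walk u u}

theorem length_le_of_odd_sub (hp : p.IsShortestOddLoop) {i j : ℕ} (hij : i ≤ j)
    (hj : j ≤ p.length) (hvi : G.Adj (p.getVert i) v) (hvj : G.Adj (p.getVert j) v)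
    (h : Odd (j - i)) : p.length ≤ j - i + 2 := by
  obtain ⟨q, hq⟩ := p.exists_walk_getVert_getVert hij hj
  let c := cons hvi.symm (q.concat hvj)
  have hc : c.length = j - i + 2 := by simp [c, hq]
  exact hc ▸ hp.2 c (hc ▸ h.add_even even_two)

theorem sub_le_two_of_even_sub (hp : p.IsShortestOddLoop) {i j : ℕ} (hij : i ≤ j)
    (hj : j ≤ p.length) (hvi : G.Adj (p.getVert i) v) (hvj : G.Adj (p.getVert j) v)
    (h : Even (j - i)) : j - i ≤ 2 := by
  obtain ⟨q, hq⟩ := p.exists_walk_getVert_getVert_of_loop hij hj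
  let c := cons hvj.symm (q.concat hvi)
  have hc : c.length = p.length - (j - i) + 2 := by simp [c, hq]
  have := hp.2 c (hc ▸ (Nat.Odd.sub_even (by omega) hp.1 h).add_even even_two)
  omega

theorem card_filter_adj_le_two (hp : p.IsShortestOddLoop) [DecidableRel G.Adj] (h5 : 5 ≤ p.length)
    (v : V) :
    #{i ∈ range p.length | G.Adj (p.getVert i) v} ≤ 2 := by
  set s := {i ∈ range p.length | G.Adj (p.getVert i) v}
  by_contra! hs
  let e := s.orderEmbOfFin rfl
  have mem : ∀ a, e a < p.length ∧ G.Adj (p.getVert (e a)) v := fun a => by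
    simpa only [s, mem_filter, mem_range] using s.orderEmbOfFin_mem rfl a
  set i := e ⟨0, by omega⟩
  set j := e ⟨1, by omega⟩
  set k := e ⟨2, hs⟩
  have hij : i < j := e.strictMono (by simp)
  have hjk : j < k := e.strictMono (by simp)
  have gap : ∀ {a b : ℕ}, a < b → b < p.length → G.Adj (p.getVert a) v →
      G.Adj (p.getVert b) v →
      (Odd (b - a) → p.length ≤ b - a + 2) ∧ (Even (b - a) → b - a ≤ 2) :=
    fun hab hb hva hvb => ⟨hp.length_le_of_odd_sub hab.le hb.le hva hvb,
      hp.sub_le_two_of_even_sub hab.le hb.le hva hvb⟩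
  have h₁ := gap hij (mem _).1 (mem _).2 (mem _).2
  have h₂ := gap hjk (mem _).1 (mem _).2 (mem _).2
  have h₃ := gap (hij.trans hjk) (mem _).1 (mem _).2 (mem _).2
  have hk : k < p.length := (mem _).1
  simp only [Nat.odd_iff, Nat.even_iff] at h₁ h₂ h₃
  omega

theorem length_mul_le_two_mul_card [Fintype V] [DecidableRel G.Adj] {d : ℕ}
    (hp : p.IsShortestOddLoop) (h5 : 5 ≤ p.length) (hreg : G.IsRegularOfDegree d) :
    p.length * d ≤ 2 * Fintype.card V := by
  have := card_mul_le_card_mul (fun i v => G.Adj (p.getVert i) v) (s := range p.length)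
    (t := univ) (m := d) (n := 2)
    (fun i _ => by simp [bipartiteAbove, ← neighborFinset_eq_filter, hreg.degree_eq])
    (fun v _ => hp.card_filter_adj_le_two h5 v)
  simpa [mul_comm] using this

end IsShortestOddLoop

end Walk

theorem exists_isShortestOddLoop (hG : ¬ G.IsBipartite) :
    ∃ (u : V) (p : G.Walk u u), p.IsShortestOddLoop := by
  classical
  have hex : ∃ L, ∃ (u : V) (p : G.Walk u u), Odd p.length ∧ p.length = L := by
    simp only [IsBipartite, two_colorable_iff_forall_loop_even, not_forall,
      Nat.not_even_iff_odd] at hG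
    obtain ⟨u, p, hp⟩ := hG
    exact ⟨_, u, p, hp, rfl⟩
  obtain ⟨u, p, hodd, hlen⟩ := Nat.find_spec hex
  exact ⟨u, p, hodd, fun x c hc => hlen ▸ Nat.find_min' hex ⟨x, c, hc, rfl⟩⟩

end SimpleGraph

/-- If `n` is odd and `G` is a `d`-regular triangle-free graph on `n`
vertices with `d ≥ 1`, then `d ≤ 2n/5`. -/
theorem regular_triangleFree_odd_degree_bound (n d : ℕ) (hn : Odd n) (hd : 1 ≤ d)
    (G : SimpleGraph (Fin n))
    (hreg : ∀ v : Fin n, Nat.card (G.neighborSet v) = d)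
    (hfree : G.CliqueFree 3) :
    (d : ℝ) ≤ 2 * (n : ℝ) / 5 := by
  classical
  have hreg' : G.IsRegularOfDegree d := fun v => by
    rw [← card_neighborSet_eq_degree, ← Nat.card_eq_fintype_card, hreg v]
  have hG : ¬ G.IsBipartite := fun hG => by
    simpa [Nat.not_even_iff_odd.mpr hn] using hreg'.even_card_of_isBipartite (by omega) hG
  obtain ⟨_, p, hp⟩ := exists_isShortestOddLoop hG
  have h5 := hfree.five_le_length_of_odd_loop p hp.1
  have hcount : 5 * d ≤ 2 * n := by
    simpa using (Nat.mul_le_mul_right d h5).trans (hp.length_mul_le_two_mul_card h5 hreg')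
  have : (5 * d : ℝ) ≤ 2 * n := by exact_mod_cast hcount
  linarith
end
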